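/- arXiv:0812.2578 — 8 statements merged into one kernel-verified Lean document; each statement's English description precedes it below -/
import Mathlib

section
/- Let K be a field, R = K[x_0,...,x_r], let I_C be the ideal generated by the 2×2 minors f_{pq} = x_{p-1}x_q - x_p x_{q-1} (1 ≤ p < q ≤ r), and for 2 ≤ i < j < h ≤ r let g_{ijh} be the 3×3 Hankel minor as above. Then for every k with 0 ≤ k ≤ r, the product x_k · g_{ijh} lies in I_C². -/
open MvPolynomial

/-- The variable `x_i` in `K[x_0, ..., x_r]`, or `0` if `i > r`. -/
noncomputable def xv {K : Type*} [Field K] {r : ℕ} (i : ℕ) : MvPolynomial (Fin (r + 1)) K :=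
  if h : i ≤ r then X ⟨i, Nat.lt_succ_of_le h⟩ else 0

/-- The `2×2` Hankel minor `f_{pq} = x_{p-1} x_q - x_p x_{q-1}`. -/
noncomputable def fmin {K : Type*} [Field K] {r : ℕ} (p q : ℕ) : MvPolynomial (Fin (r + 1)) K :=
  xv (p - 1) * xv q - xv p * xv (q - 1)

/-- The `3×3` Hankel minor `g_{ijh}`. -/
noncomputable def gmin {K : Type*} [Field K] {r : ℕ} (i j h : ℕ) :
    MvPolynomial (Fin (r + 1)) K :=
  Matrix.det !![xv (i - 2), xv (j - 2), xv (h - 2);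
                xv (i - 1), xv (j - 1), xv (h - 1);
                xv i,       xv j,       xv h]

/-- The ideal of the rational normal curve of degree `r`. -/
noncomputable def rncIdeal (K : Type*) [Field K] (r : ℕ) :
    Ideal (MvPolynomial (Fin (r + 1)) K) :=
  Ideal.span {f | ∃ p q : ℕ, 1 ≤ p ∧ p < q ∧ q ≤ r ∧ f = fmin p q}


section

variable {K : Type*} [Field K] {r : ℕ}

lemma fmin_self (p : ℕ) : fmin (K := K) (r := r) p p = 0 := by
  unfold fmin; ring

lemma fmin_swap (p q : ℕ) : fmin (K := K) (r := r) q p = -fmin p q := by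
  unfold fmin; ring

lemma fmin_mem_rncIdeal {p q : ℕ} (hp : 1 ≤ p) (hpr : p ≤ r) (hq : 1 ≤ q) (hqr : q ≤ r) :
    fmin p q ∈ rncIdeal K r := by
  rcases lt_trichotomy p q with hlt | rfl | hgt
  · exact Ideal.subset_span ⟨p, q, hp, hlt, hqr, rfl⟩
  · rw [fmin_self]; exact zero_mem _
  · rw [fmin_swap]; exact neg_mem (Ideal.subset_span ⟨q, p, hq, hgt, hpr, rfl⟩)

lemma fmin_mul_fmin_mem_rncIdeal_sq {p q s t : ℕ} (hp : 1 ≤ p) (hpr : p ≤ r) (hq : 1 ≤ q)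
    (hqr : q ≤ r) (hs : 1 ≤ s) (hsr : s ≤ r) (ht : 1 ≤ t) (htr : t ≤ r) :
    fmin p q * fmin s t ∈ rncIdeal K r ^ 2 :=
  pow_two (rncIdeal K r) ▸
    Ideal.mul_mem_mul (fmin_mem_rncIdeal hp hpr hq hqr) (fmin_mem_rncIdeal hs hsr ht htr)

lemma gmin_eq (i j h : ℕ) :
    gmin (K := K) (r := r) i j h =
      xv (i - 2) * xv (j - 1) * xv h - xv (i - 2) * xv (h - 1) * xv j
        - xv (j - 2) * xv (i - 1) * xv h + xv (j - 2) * xv (h - 1) * xv i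
        + xv (h - 2) * xv (i - 1) * xv j - xv (h - 2) * xv (j - 1) * xv i := by
  rw [gmin, Matrix.det_fin_three]
  simp only [Matrix.of_apply, Matrix.cons_val', Matrix.cons_val_zero, Matrix.cons_val_fin_one,
    Matrix.cons_val_one, Matrix.cons_val]

/- Both expansions are identities in the formal symbols `x_n`: in the first the terms carrying
`x_{k-1}` cancel, in the second those carrying `x_{k+1}`. The first gives quadrics of `I_C` when
`k ≥ 1`, the second when `k < r`. -/
lemma xv_mul_gmin_eq_of_pred (i j h k : ℕ) :
    xv (K := K) (r := r) k * gmin i j h =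
      fmin k i * fmin j (h - 1) - fmin k (i - 1) * fmin j h
        + fmin k (j - 1) * fmin i h - fmin k j * fmin i (h - 1) := by
  simp only [gmin_eq, fmin, Nat.sub_sub]
  ring

lemma xv_mul_gmin_eq_of_succ (i j h k : ℕ) :
    xv (K := K) (r := r) k * gmin i j h =
      fmin (k + 1) i * fmin (j - 1) (h - 1) - fmin (k + 1) (i - 1) * fmin (j - 1) h
        + fmin (k + 1) (j - 1) * fmin (i - 1) h - fmin (k + 1) j * fmin (i - 1) (h - 1) := by
  simp only [gmin_eq, fmin, Nat.sub_sub, Nat.add_sub_cancel]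
  ring

end

/-- For every variable `x_k`, the product `x_k · g_{ijh}` lies in `I_C²`. -/
theorem stmt2 {K : Type*} [Field K] {r : ℕ} (i j h k : ℕ)
    (h1 : 2 ≤ i) (h2 : i < j) (h3 : j < h) (h4 : h ≤ r) (hk : k ≤ r) :
    xv (K := K) (r := r) k * gmin i j h ∈ (rncIdeal K r) ^ 2 := by
  obtain rfl | hk0 := Nat.eq_zero_or_pos k <;>
    [rw [xv_mul_gmin_eq_of_succ]; rw [xv_mul_gmin_eq_of_pred]] <;>
    refine sub_mem (add_mem (sub_mem ?_ ?_) ?_) ?_ <;>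
    apply fmin_mul_fmin_mem_rncIdeal_sq <;> omega
end

section
/- Let R = K[x_0,...,x_n] with n > r, let S = K[x_0,...,x_r] ⊆ R, let I be an ideal of R extended from an ideal of S (i.e., generated by polynomials involving only x_0,...,x_r), and let L = ⟨x_{r+1},...,x_l⟩ for any r+1 ≤ l ≤ n. Then I ∩ L = I · L. -/
/-!
The substitution `ψ` killing `x_{r+1}, …, x_l` is an idempotent ring endomorphism with
kernel `L` that fixes the generators of `I`. For `f = ∑ aᵢ gᵢ ∈ I` we get
`f - ψ f = ∑ (aᵢ - ψ aᵢ) gᵢ ∈ L·I`, so if moreover `f ∈ L = ker ψ`, then `f ∈ I·L`.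
-/

open MvPolynomial

theorem Ideal.sub_mem_span_mul_of_retraction {A : Type*} [CommRing A] (ψ : A →+* A)
    {G : Set A} (hG : ∀ g ∈ G, ψ g = g) {L : Ideal A} (hsub : ∀ a, a - ψ a ∈ L)
    {f : A} (hf : f ∈ Ideal.span G) : f - ψ f ∈ Ideal.span G * L := by
  induction hf using Submodule.span_induction with
  | mem g hg => simp [hG g hg]
  | zero => simp
  | add a b _ _ ha hb => simpa [add_sub_add_comm] using Ideal.add_mem _ ha hb
  | smul a b hb hab =>
    have hsplit : a * b - ψ (a * b) = b * (a - ψ a) + ψ a * (b - ψ b) := by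
      rw [map_mul]; ring
    rw [smul_eq_mul, hsplit]
    exact Ideal.add_mem _ (Ideal.mul_mem_mul hb (hsub a)) (Ideal.mul_mem_left _ _ hab)

theorem Ideal.span_inf_eq_mul_of_retraction {A : Type*} [CommRing A] (ψ : A →+* A)
    {G : Set A} (hG : ∀ g ∈ G, ψ g = g) {L : Ideal A} (hsub : ∀ a, a - ψ a ∈ L)
    (hker : L ≤ RingHom.ker ψ) : Ideal.span G ⊓ L = Ideal.span G * L := by
  refine le_antisymm ?_ Ideal.mul_le_inf
  rintro f ⟨hfG, hfL⟩
  simpa [RingHom.mem_ker.mp (hker hfL)] using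
    Ideal.sub_mem_span_mul_of_retraction ψ hG hsub hfG

namespace MvPolynomial

variable {σ R : Type*} [CommRing R] (s : Set σ) [∀ i, Decidable (i ∈ s)]

noncomputable def retractVars : MvPolynomial σ R →ₐ[R] MvPolynomial σ R :=
  aeval fun i ↦ if i ∈ s then X i else 0

theorem retractVars_X_of_mem {i : σ} (hi : i ∈ s) :
    retractVars s (X i : MvPolynomial σ R) = X i := by
  simp [retractVars, hi]

theorem retractVars_X_of_notMem {i : σ} (hi : i ∉ s) :
    retractVars s (X i : MvPolynomial σ R) = 0 := by
  simp [retractVars, hi]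

theorem retractVars_eq_self {q : MvPolynomial σ R} (hq : (q.vars : Set σ) ⊆ s) :
    retractVars s q = q :=
  aeval_ite_mem_eq_self q hq

theorem span_X_compl_le_ker_retractVars :
    Ideal.span (X '' sᶜ) ≤ RingHom.ker (retractVars s : MvPolynomial σ R →ₐ[R] _) :=
  Ideal.span_le.mpr <| by
    rintro _ ⟨i, hi, rfl⟩
    exact retractVars_X_of_notMem s hi

theorem sub_retractVars_mem_span_X_compl (p : MvPolynomial σ R) :
    p - retractVars s p ∈ Ideal.span (X '' sᶜ) := by
  induction p using MvPolynomial.induction_on with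
  | C a => simp
  | add p q hp hq => simpa [add_sub_add_comm] using Ideal.add_mem _ hp hq
  | mul_X p i hp =>
    have hsplit : p * X i - retractVars s (p * X i) =
        (p - retractVars s p) * X i + retractVars s p * (X i - retractVars s (X i)) := by
      rw [map_mul]; ring
    rw [hsplit]
    refine Ideal.add_mem _ (Ideal.mul_mem_right _ _ hp) (Ideal.mul_mem_left _ _ ?_)
    by_cases hi : i ∈ s
    · simp [retractVars_X_of_mem s hi]
    · simpa [retractVars_X_of_notMem s hi] using Ideal.subset_span (Set.mem_image_of_mem X hi)

end MvPolynomial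

theorem stmt4_general {K : Type*} [Field K] {n r l : ℕ}
    (G : Set (MvPolynomial (Fin (n + 1)) K))
    (hG : ∀ g ∈ G, ∀ i ∈ MvPolynomial.vars g, (i : ℕ) ≤ r)
    (I : Ideal (MvPolynomial (Fin (n + 1)) K)) (hI : I = Ideal.span G)
    (L : Ideal (MvPolynomial (Fin (n + 1)) K))
    (hL : L = Ideal.span {p | ∃ i : Fin (n + 1), r + 1 ≤ (i : ℕ) ∧ (i : ℕ) ≤ l ∧ p = X i}) :
    I ⊓ L = I * L := by
  let s : Set (Fin (n + 1)) := {i | ¬(r + 1 ≤ (i : ℕ) ∧ (i : ℕ) ≤ l)}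
  have hLs : L = Ideal.span (X '' sᶜ) := by
    rw [hL]
    congr 1
    ext p
    simp [s, eq_comm, and_assoc]
  subst hI hLs
  refine Ideal.span_inf_eq_mul_of_retraction (retractVars s).toRingHom (fun g hg ↦ ?_)
    (sub_retractVars_mem_span_X_compl s) (span_X_compl_le_ker_retractVars s)
  refine retractVars_eq_self s fun i hi ↦ ?_
  have := hG g hg i hi
  simp only [s, Set.mem_ofPred_eq]
  omega

/-- If `I ⊆ K[x_0,...,x_n]` is extended from `K[x_0,...,x_r]` (its generators only involve
the variables `x_0, ..., x_r`) and `L = ⟨x_{r+1}, ..., x_l⟩`, then `I ∩ L = I·L`. -/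
theorem stmt4 {K : Type*} [Field K] {n r l : ℕ} (hrn : r < n) (hl1 : r + 1 ≤ l) (hln : l ≤ n)
    (G : Set (MvPolynomial (Fin (n + 1)) K))
    (hG : ∀ g ∈ G, ∀ i ∈ MvPolynomial.vars g, (i : ℕ) ≤ r)
    (I : Ideal (MvPolynomial (Fin (n + 1)) K)) (hI : I = Ideal.span G)
    (L : Ideal (MvPolynomial (Fin (n + 1)) K))
    (hL : L = Ideal.span {p | ∃ i : Fin (n + 1), r + 1 ≤ (i : ℕ) ∧ (i : ℕ) ≤ l ∧ p = X i}) :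
    I ⊓ L = I * L :=
  stmt4_general G hG I hI L hL
end

section
/- Let r ≥ 2 and let ψ_r : (K[t,u]-module of pairs e_p ∧ e_q, 1 ≤ p < q ≤ r) be given on basis elements by ψ_r(e_p ∧ e_q) = Σ_{h=p}^{q-1} t^{r-h-1} u^{h-1} g_{p+q-1-h}, a map of graded free modules ⋀² K[t,u]^r → K[t,u]^{r-1}. Then for all 1 ≤ p < q ≤ r−1, the element u² e_p∧e_q − tu e_p∧e_{q+1} − tu e_{p+1}∧e_q + t² e_{p+1}∧e_{q+1} lies in the kernel of ψ_r (interpreting e_{p+1}∧e_q = −e_q∧e_{p+1} when q = p+1, i.e., that term is −tu·0 when q=p+1: use the wedge convention e_a∧e_a = 0 and e_a∧e_b = −e_b∧e_a). -/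
/-!
With `m h = t^(r-h-1) u^(h-1)` one has `u · m h = t · m (h+1)` for `1 ≤ h ≤ r-2`, while the
coordinate `p+q-1-h` hit by the summand `h` is unchanged when `p + q` and `h` both go up by one.
Shifting the summation index therefore gives
`u² ψ(e_p∧e_q) = tu (ψ(e_{p+1}∧e_q) + c)` and `t² ψ(e_{p+1}∧e_{q+1}) = tu (ψ(e_p∧e_{q+1}) - c)`,
where `c` is the summand `h = q` of `ψ(e_p∧e_{q+1})`.
-/

open MvPolynomial Finset

/-- The map `ψ_r` on wedge basis elements, extended antisymmetrically:
`ψ_r(e_p ∧ e_q) = ∑_{h=p}^{q-1} t^{r-h-1} u^{h-1} g_{p+q-1-h}` for `p < q`,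
with `ψ_r(e_a ∧ e_a) = 0` and `ψ_r(e_q ∧ e_p) = -ψ_r(e_p ∧ e_q)`.
Here `t = X 0`, `u = X 1` in `K[t,u]`, and the target free module `K[t,u]^{r-1}`
is encoded as functions `ℕ → K[t,u]` (coordinate `k` is the coefficient of `g_k`). -/
noncomputable def psi {K : Type*} [Field K] (r : ℕ) (p q : ℕ) :
    ℕ → MvPolynomial (Fin 2) K := fun k =>
  (∑ h ∈ Finset.Ico p q,
      if p + q - 1 - h = k then (X 0 : MvPolynomial (Fin 2) K) ^ (r - h - 1) * (X 1) ^ (h - 1)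
      else 0)
  - (∑ h ∈ Finset.Ico q p,
      if p + q - 1 - h = k then (X 0 : MvPolynomial (Fin 2) K) ^ (r - h - 1) * (X 1) ^ (h - 1)
      else 0)

section ShiftedSums

variable {R : Type*} [CommRing R]

theorem mul_sum_Ico_eq_mul_sum_Ico_succ (f : ℕ → ℕ → R) {t u : R} {s a b : ℕ}
    (hf : ∀ h ∈ Ico a b, u * f s h = t * f (s + 1) (h + 1)) :
    u * ∑ h ∈ Ico a b, f s h = t * ∑ h ∈ Ico (a + 1) (b + 1), f (s + 1) h := by
  rw [mul_sum, mul_sum, ← sum_Ico_add' (fun h => t * f (s + 1) h)]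
  exact sum_congr rfl hf

theorem quadratic_relation_sum_Ico (f : ℕ → ℕ → R) {t u : R} {p q : ℕ} (hpq : p < q)
    (hf : ∀ s, ∀ h ∈ Ico p q, u * f s h = t * f (s + 1) (h + 1)) :
    u ^ 2 * ∑ h ∈ Ico p q, f (p + q) h
      - t * u * ∑ h ∈ Ico p (q + 1), f (p + (q + 1)) h
      - t * u * ∑ h ∈ Ico (p + 1) q, f (p + 1 + q) h
      + t ^ 2 * ∑ h ∈ Ico (p + 1) (q + 1), f (p + 1 + (q + 1)) h = 0 := by
  have hup : u * ∑ h ∈ Ico p q, f (p + q) h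
      = t * ∑ h ∈ Ico (p + 1) (q + 1), f (p + q + 1) h :=
    mul_sum_Ico_eq_mul_sum_Ico_succ f (hf _)
  have hdown : u * ∑ h ∈ Ico p q, f (p + q + 1) h
      = t * ∑ h ∈ Ico (p + 1) (q + 1), f (p + q + 2) h :=
    mul_sum_Ico_eq_mul_sum_Ico_succ f (hf _)
  rw [show p + (q + 1) = p + q + 1 by ring, show p + 1 + q = p + q + 1 by ring,
    show p + 1 + (q + 1) = p + q + 2 by ring, sum_Ico_succ_top (by omega : p ≤ q)]
  rw [sum_Ico_succ_top (by omega : p + 1 ≤ q)] at hup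
  linear_combination u * hup - t * hdown

end ShiftedSums

/-- The `h`-th summand of the `k`-th coordinate of `ψ_r(e_a ∧ e_b)`, with `s = a + b`. -/
noncomputable def psiSummand (K : Type*) [Field K] (r k s h : ℕ) : MvPolynomial (Fin 2) K :=
  if s - 1 - h = k then X 0 ^ (r - h - 1) * X 1 ^ (h - 1) else 0

theorem psi_eq_sum_Ico {K : Type*} [Field K] {r a b : ℕ} (hab : a ≤ b) (k : ℕ) :
    psi r a b k = ∑ h ∈ Ico a b, psiSummand K r k (a + b) h := by
  simp [psi, psiSummand, Ico_eq_empty_of_le hab]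

theorem X_one_mul_psiSummand {K : Type*} [Field K] {r h : ℕ} (k s : ℕ) (h1 : 1 ≤ h)
    (hr : h + 2 ≤ r) :
    X 1 * psiSummand K r k s h = X 0 * psiSummand K r k (s + 1) (h + 1) := by
  rw [psiSummand, psiSummand, show s + 1 - 1 - (h + 1) = s - 1 - h by omega]
  split_ifs
  · rw [show r - h - 1 = r - (h + 1) - 1 + 1 by omega, show h + 1 - 1 = h - 1 + 1 by omega]
    ring
  · rw [mul_zero, mul_zero]

theorem stmt6_general {K : Type*} [Field K] {r : ℕ} (p q : ℕ)
    (hp : 1 ≤ p) (hpq : p < q) (hq : q ≤ r - 1) :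
    ∀ k : ℕ,
      (X 1 : MvPolynomial (Fin 2) K) ^ 2 * psi r p q k
        - X 0 * X 1 * psi r p (q + 1) k
        - X 0 * X 1 * psi r (p + 1) q k
        + (X 0) ^ 2 * psi r (p + 1) (q + 1) k = 0 := by
  intro k
  rw [psi_eq_sum_Ico hpq.le, psi_eq_sum_Ico (by omega : p ≤ q + 1), psi_eq_sum_Ico hpq,
    psi_eq_sum_Ico (by omega : p + 1 ≤ q + 1)]
  refine quadratic_relation_sum_Ico (psiSummand K r k) hpq fun s h hh => ?_
  obtain ⟨hph, hhq⟩ := mem_Ico.mp hh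
  exact X_one_mul_psiSummand k s (by omega) (by omega)

/-- For all `1 ≤ p < q ≤ r-1`, the element
`u² e_p∧e_q − tu e_p∧e_{q+1} − tu e_{p+1}∧e_q + t² e_{p+1}∧e_{q+1}`
lies in the kernel of `ψ_r`. -/
theorem stmt6 {K : Type*} [Field K] {r : ℕ} (hr : 2 ≤ r) (p q : ℕ)
    (hp : 1 ≤ p) (hpq : p < q) (hq : q ≤ r - 1) :
    ∀ k : ℕ,
      (X 1 : MvPolynomial (Fin 2) K) ^ 2 * psi r p q k
        - X 0 * X 1 * psi r p (q + 1) k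
        - X 0 * X 1 * psi r (p + 1) q k
        + (X 0) ^ 2 * psi r (p + 1) (q + 1) k = 0 :=
  stmt6_general p q hp hpq hq
end

section
/- With ψ_r as above (ψ_r(e_p∧e_q) = Σ_{h=p}^{q-1} t^{r-h-1}u^{h-1} g_{p+q-1-h}), the map ψ_r is surjective at every point of P¹; concretely, for every (t_0 : u_0) ∈ P¹, the vectors ψ_r(e_1∧e_2),...,ψ_r(e_1∧e_r) evaluated at (t_0,u_0) span K^{r-1} whenever t_0 ≠ 0, and the vectors ψ_r(e_1∧e_r),...,ψ_r(e_{r-1}∧e_r) evaluated at (t_0,u_0) span K^{r-1} whenever u_0 ≠ 0. -/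
/-! Only the summand `h = p + q - 2 - k` of `ψ_r(e_p ∧ e_q)` contributes to the coordinate
`g_{k+1}`. Hence for `t₀ ≠ 0` the vectors `ψ_r(e_1 ∧ e_{k+2})` are the rows of a lower
triangular matrix with diagonal `t₀^{r-2}`, and for `u₀ ≠ 0` the vectors `ψ_r(e_{k+1} ∧ e_r)` are
the rows of an upper triangular matrix with diagonal `u₀^{r-2}`; both have nonzero determinant. -/

open Finset

/-- `ψ_r(e_p ∧ e_q)` evaluated at the point `(t₀, u₀)`, as a vector in `K^{r-1}`
(coordinate `k : Fin (r-1)` corresponds to the basis vector `g_{k+1}`). -/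
noncomputable def evalPsi {K : Type*} [Field K] (r : ℕ) (t0 u0 : K) (p q : ℕ) :
    Fin (r - 1) → K := fun k =>
  ∑ h ∈ Finset.Ico p q,
    if p + q - 1 - h = (k : ℕ) + 1 then t0 ^ (r - h - 1) * u0 ^ (h - 1) else 0

namespace Matrix

variable {K n : Type*} [Field K] [Fintype n] [DecidableEq n] {A : Matrix n n K}

theorem span_range_eq_top_of_det_ne_zero (hA : A.det ≠ 0) :
    Submodule.span K (Set.range A) = ⊤ :=
  (linearIndependent_rows_of_det_ne_zero hA).span_eq_top_of_card_eq_finrank' (by simp)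

theorem span_range_eq_top_of_isUpperTriangular [LinearOrder n] (hA : A.IsUpperTriangular)
    (hdiag : ∀ i, A i i ≠ 0) : Submodule.span K (Set.range A) = ⊤ :=
  span_range_eq_top_of_det_ne_zero <| by
    rw [det_of_isUpperTriangular hA]
    exact prod_ne_zero_iff.mpr fun i _ => hdiag i

theorem span_range_eq_top_of_isLowerTriangular [LinearOrder n] (hA : A.IsLowerTriangular)
    (hdiag : ∀ i, A i i ≠ 0) : Submodule.span K (Set.range A) = ⊤ :=
  span_range_eq_top_of_det_ne_zero <| by
    rw [det_of_isLowerTriangular A hA]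
    exact prod_ne_zero_iff.mpr fun i _ => hdiag i

end Matrix

section evalPsi

variable {K : Type*} [Field K] (r : ℕ) (t0 u0 : K) {p q : ℕ}

theorem evalPsi_apply (k : Fin (r - 1)) :
    evalPsi r t0 u0 p q k =
      ∑ h ∈ Ico p q, if h + k + 2 = p + q then t0 ^ (r - h - 1) * u0 ^ (h - 1) else 0 :=
  sum_congr rfl fun h hh => by
    rw [mem_Ico] at hh
    exact if_congr (by omega) rfl rfl

theorem evalPsi_apply_of_add_eq {h : ℕ} {k : Fin (r - 1)} (hp : p ≤ h) (hq : h < q)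
    (hk : h + k + 2 = p + q) : evalPsi r t0 u0 p q k = t0 ^ (r - h - 1) * u0 ^ (h - 1) := by
  rw [evalPsi_apply, sum_eq_single_of_mem h (mem_Ico.mpr ⟨hp, hq⟩), if_pos hk]
  intro h' _ hne
  rw [if_neg (by omega)]

theorem evalPsi_apply_eq_zero {k : Fin (r - 1)} (hk : q ≤ k + 1 ∨ k + 1 < p) :
    evalPsi r t0 u0 p q k = 0 := by
  rw [evalPsi_apply]
  refine sum_eq_zero fun h hh => ?_
  rw [mem_Ico] at hh
  rw [if_neg (by omega)]

end evalPsi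

theorem stmt7_general {K : Type*} [Field K] {r : ℕ} (t0 u0 : K) :
    (t0 ≠ 0 →
      Submodule.span K ((fun q => evalPsi r t0 u0 1 q) '' Set.Icc 2 r) = ⊤) ∧
    (u0 ≠ 0 →
      Submodule.span K ((fun p => evalPsi r t0 u0 p r) '' Set.Icc 1 (r - 1)) = ⊤) := by
  constructor
  · intro ht0
    let A : Matrix (Fin (r - 1)) (Fin (r - 1)) K := fun i => evalPsi r t0 u0 1 (i + 2)
    have hA : Submodule.span K (Set.range A) = ⊤ :=
      A.span_range_eq_top_of_isLowerTriangular
        (fun i j (hij : i < j) => evalPsi_apply_eq_zero r t0 u0 (.inl (by omega)))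
        (fun i => by
          change evalPsi r t0 u0 1 (i + 2) i ≠ 0
          rw [evalPsi_apply_of_add_eq r t0 u0 (h := 1) le_rfl (by omega) (by omega)]
          simpa using pow_ne_zero _ ht0)
    refine top_unique (hA ▸ Submodule.span_mono ?_)
    rintro _ ⟨i, rfl⟩
    exact ⟨i + 2, ⟨by omega, by omega⟩, rfl⟩
  · intro hu0
    let A : Matrix (Fin (r - 1)) (Fin (r - 1)) K := fun i => evalPsi r t0 u0 (i + 1) r
    have hA : Submodule.span K (Set.range A) = ⊤ :=
      A.span_range_eq_top_of_isUpperTriangular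
        (fun i j (hij : j < i) => evalPsi_apply_eq_zero r t0 u0 (.inr (by omega)))
        (fun i => by
          have := i.isLt
          change evalPsi r t0 u0 (i + 1) r i ≠ 0
          rw [evalPsi_apply_of_add_eq r t0 u0 (h := r - 1) (by omega) (by omega) (by omega)]
          rw [show r - (r - 1) - 1 = 0 by omega, pow_zero, one_mul]
          exact pow_ne_zero _ hu0)
    refine top_unique (hA ▸ Submodule.span_mono ?_)
    rintro _ ⟨i, rfl⟩
    exact ⟨i + 1, ⟨by omega, by omega⟩, rfl⟩

/-- `ψ_r` is surjective at every point of `P¹`: if `t₀ ≠ 0` the vectors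
`ψ_r(e_1∧e_2), ..., ψ_r(e_1∧e_r)` evaluated at `(t₀,u₀)` span `K^{r-1}`, and if `u₀ ≠ 0`
the vectors `ψ_r(e_1∧e_r), ..., ψ_r(e_{r-1}∧e_r)` evaluated at `(t₀,u₀)` span `K^{r-1}`. -/
theorem stmt7 {K : Type*} [Field K] [IsAlgClosed K] {r : ℕ} (hr : 2 ≤ r) (t0 u0 : K)
    (h0 : ¬(t0 = 0 ∧ u0 = 0)) :
    (t0 ≠ 0 →
      Submodule.span K ((fun q => evalPsi r t0 u0 1 q) '' Set.Icc 2 r) = ⊤) ∧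
    (u0 ≠ 0 →
      Submodule.span K ((fun p => evalPsi r t0 u0 p r) '' Set.Icc 1 (r - 1)) = ⊤) :=
  stmt7_general t0 u0
end

section
/- In R = K[x,y,z,w], for b ≥ 1 the four polynomials w², w(xz−y²), (xz−y²)², x^{b−1}(xz−y²) − z^b w form a Gröbner basis (with respect to the degree reverse lexicographic order with x > y > z > w) of the ideal I_X they generate; in particular the initial ideal of I_X is ⟨w², y²w, y⁴, x^{b−1}y²⟩. -/
/-!
Write `q = xz - y²`. Splitting off powers of `w`, every `f ∈ I_X` can be written
`f = q g + (f₁ + F w) w` with `g = C q + D x^(b-1)` and `f₁ = B q - D z^b`, where `B, C, D` do not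
involve `w`. If the leading monomial of `f` has `w`-degree at least two it is divisible by `w²`;
if it has `w`-degree zero it is `y² · lead g`, and if one it is `w · lead f₁`.

The parametrization `(x, y, z) ↦ (s², st, t²)` kills `q`, and a `w`-free monomial of `y`-degree
at most one is the degrevlex-smallest monomial with its image, so such a leading monomial survives
the parametrization. Writing `D̃` for the image of `D`, `g` maps to `D̃ s^(2(b-1))`, so a leading
monomial of `g` of `y`-degree at most one is divisible by `x^(b-1)`. As `f₁` maps to `-D̃ t^(2b)`,
a leading monomial of `f₁` of `y`-degree at most one forces a monomial of `g` of degree at least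
`deg (lead f₁) - 1`; then `y² · lead g` is a monomial of `f` of degree at least `deg (lead f)` and
of smaller `w`-degree, which degrevlex forbids.
-/

open MvPolynomial

/-- Degrevlex on exponents in 4 variables `x > y > z > w` (indices `0 > 1 > 2 > 3`). -/
def drlt {N : ℕ} (a b : Fin N →₀ ℕ) : Prop :=
  (∑ i, a i) < (∑ i, b i) ∨
  ((∑ i, a i) = (∑ i, b i) ∧ ∃ i : Fin N, b i < a i ∧ ∀ j : Fin N, i < j → a j = b j)

/-- `d` is the leading monomial (exponent) of `f` with respect to the term order `lt`. -/
def IsLeadMon {K : Type*} [Field K] {N : ℕ}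
    (lt : (Fin N →₀ ℕ) → (Fin N →₀ ℕ) → Prop)
    (f : MvPolynomial (Fin N) K) (d : Fin N →₀ ℕ) : Prop :=
  d ∈ f.support ∧ ∀ e ∈ f.support, e ≠ d → lt e d

/-- The initial ideal of `I` with respect to the term order `lt`. -/
noncomputable def initialIdeal {K : Type*} [Field K] {N : ℕ}
    (lt : (Fin N →₀ ℕ) → (Fin N →₀ ℕ) → Prop)
    (I : Ideal (MvPolynomial (Fin N) K)) : Ideal (MvPolynomial (Fin N) K) :=
  Ideal.span {m | ∃ f ∈ I, f ≠ 0 ∧ ∃ d, IsLeadMon lt f d ∧ m = monomial d 1}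

section Degrevlex

variable {N : ℕ} {a b c : Fin N →₀ ℕ}

theorem drlt_irrefl (a : Fin N →₀ ℕ) : ¬ drlt a a := by
  rintro (h | ⟨-, i, hi, -⟩) <;> exact lt_irrefl _ ‹_›

theorem drlt_trans (hab : drlt a b) (hbc : drlt b c) : drlt a c := by
  rcases hab with hab | ⟨hab, i, hi, hia⟩ <;> rcases hbc with hbc | ⟨hbc, j, hj, hjb⟩
  · exact Or.inl (hab.trans hbc)
  · exact Or.inl (hbc ▸ hab)
  · exact Or.inl (hab ▸ hbc)
  · refine Or.inr ⟨hab.trans hbc, ?_⟩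
    rcases lt_trichotomy i j with hij | rfl | hij
    · exact ⟨j, hia j hij ▸ hj, fun k hk => (hia k (hij.trans hk)).trans (hjb k hk)⟩
    · exact ⟨i, hj.trans hi, fun k hk => (hia k hk).trans (hjb k hk)⟩
    · exact ⟨i, hjb i hij ▸ hi, fun k hk => (hia k hk).trans (hjb k (hij.trans hk))⟩

theorem drlt_trichotomous (a b : Fin N →₀ ℕ) : drlt a b ∨ a = b ∨ drlt b a := by
  classical
  rcases lt_trichotomy (∑ i, a i) (∑ i, b i) with hs | hs | hs
  · exact Or.inl (Or.inl hs)
  · by_cases hab : a = b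
    · exact Or.inr (Or.inl hab)
    have hne : (Finset.univ.filter fun i => a i ≠ b i).Nonempty :=
      ⟨_, Finset.mem_filter.mpr ⟨Finset.mem_univ _, (Finsupp.ne_iff.mp hab).choose_spec⟩⟩
    set i := (Finset.univ.filter fun i => a i ≠ b i).max' hne
    have hi : a i ≠ b i := (Finset.mem_filter.mp (Finset.max'_mem _ hne)).2
    have hgt : ∀ j, i < j → a j = b j := fun j hij => by
      by_contra hj
      exact (Finset.le_max' _ j (Finset.mem_filter.mpr ⟨Finset.mem_univ _, hj⟩)).not_gt hij
    rcases hi.lt_or_gt with hi | hi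
    · exact Or.inr (Or.inr (Or.inr ⟨hs.symm, i, hi, fun j hj => (hgt j hj).symm⟩))
    · exact Or.inl (Or.inr ⟨hs, i, hi, hgt⟩)
  · exact Or.inr (Or.inr (Or.inl hs))

instance : IsStrictTotalOrder (Fin N →₀ ℕ) drlt where
  trichotomous a b hab hba := ((drlt_trichotomous a b).resolve_left hab).resolve_right hba
  irrefl := drlt_irrefl
  trans _ _ _ := drlt_trans

theorem drlt_add_right_iff (c : Fin N →₀ ℕ) : drlt (a + c) (b + c) ↔ drlt a b := by
  simp only [drlt, Finsupp.add_apply, Finset.sum_add_distrib, add_lt_add_iff_right,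
    add_left_inj]

theorem drlt_add_right (c : Fin N →₀ ℕ) (h : drlt a b) : drlt (a + c) (b + c) :=
  (drlt_add_right_iff c).mpr h

theorem sum_le_of_drlt (h : drlt a b) : ∑ i, a i ≤ ∑ i, b i :=
  h.elim le_of_lt fun h => h.1.le

theorem drlt_of_sum_le_of_apply_last_lt {n : ℕ} {a b : Fin (n + 1) →₀ ℕ}
    (hsum : ∑ i, a i ≤ ∑ i, b i) (hlast : b (Fin.last n) < a (Fin.last n)) : drlt a b :=
  hsum.lt_or_eq.imp id fun hsum =>
    ⟨hsum, Fin.last n, hlast, fun j hj => absurd hj (Fin.le_last j).not_gt⟩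

theorem sum_lt_of_drlt_of_apply_last_lt {n : ℕ} {a b : Fin (n + 1) →₀ ℕ} (h : drlt a b)
    (hlast : a (Fin.last n) < b (Fin.last n)) : ∑ i, a i < ∑ i, b i := by
  refine h.resolve_right ?_
  rintro ⟨-, i, hi, hij⟩
  rcases (Fin.le_last i).lt_or_eq with hlt | rfl
  · exact hlast.ne (hij _ hlt)
  · exact hi.not_gt hlast

end Degrevlex

section LeadingMonomial

variable {K : Type*} [Field K] {N : ℕ} {lt : (Fin N →₀ ℕ) → (Fin N →₀ ℕ) → Prop}
  {f g : MvPolynomial (Fin N) K} {d e : Fin N →₀ ℕ}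

theorem IsLeadMon.ne_zero (h : IsLeadMon lt f d) : f ≠ 0 := by
  rintro rfl
  simp [IsLeadMon] at h

theorem IsLeadMon.eq_or_lt (h : IsLeadMon lt f d) {m : Fin N →₀ ℕ} (hm : m ∈ f.support) :
    m = d ∨ lt m d :=
  or_iff_not_imp_left.mpr (h.2 m hm)

theorem IsLeadMon.unique [Std.Asymm lt] (h : IsLeadMon lt f d) (h' : IsLeadMon lt f e) :
    d = e := by
  by_contra hne
  exact asymm (h'.2 d h.1 hne) (h.2 e h'.1 (Ne.symm hne))

theorem exists_isLeadMon [IsStrictTotalOrder _ lt] (hf : f ≠ 0) : ∃ d, IsLeadMon lt f d := by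
  classical
  let := linearOrderOfSTO lt
  obtain ⟨d, hd, hmax⟩ := f.support.exists_max_image id (support_nonempty.mpr hf)
  exact ⟨d, hd, fun e he hne => (hmax e he).resolve_left hne⟩

theorem isLeadMon_monomial {c : K} (hc : c ≠ 0) : IsLeadMon lt (monomial d c) d := by
  classical
  rw [IsLeadMon, support_monomial, if_neg hc]
  exact ⟨Finset.mem_singleton_self d, fun e he hne => absurd (Finset.mem_singleton.mp he) hne⟩

theorem IsLeadMon.neg (h : IsLeadMon lt f d) : IsLeadMon lt (-f) d := by
  rwa [IsLeadMon, support_neg]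

theorem IsLeadMon.add [IsStrictOrder _ lt] (hf : IsLeadMon lt f d) (hg : IsLeadMon lt g e)
    (hed : lt e d) : IsLeadMon lt (f + g) d := by
  have hgd : coeff d g = 0 := notMem_support_iff.mp fun hd =>
    (hg.eq_or_lt hd).elim (fun h => irrefl _ (h ▸ hed)) (fun h => asymm h hed)
  refine ⟨by simpa [mem_support_iff, hgd] using hf.1, fun m hm hne => ?_⟩
  rcases Finset.mem_union.mp (support_add hm) with hm | hm
  · exact hf.2 m hm hne
  · exact (hg.eq_or_lt hm).elim (fun h => h ▸ hed) (fun h => _root_.trans h hed)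

theorem IsLeadMon.mul [IsStrictOrder _ lt] (hadd : ∀ {a b} c, lt a b → lt (a + c) (b + c))
    (hf : IsLeadMon lt f d) (hg : IsLeadMon lt g e) : IsLeadMon lt (f * g) (d + e) := by
  classical
  have key : ∀ u ∈ f.support, ∀ v ∈ g.support, (u, v) ≠ (d, e) → lt (u + v) (d + e) := by
    intro u hu v hv huv
    rcases hf.eq_or_lt hu with rfl | hu <;> rcases hg.eq_or_lt hv with rfl | hv
    · exact absurd rfl huv
    · simpa only [add_comm u] using hadd u hv
    · exact hadd v hu
    · exact _root_.trans (hadd v hu) (by simpa only [add_comm d] using hadd d hv)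
  have hcoeff : coeff (d + e) (f * g) = coeff d f * coeff e g := by
    rw [coeff_mul]
    refine Finset.sum_eq_single_of_mem (d, e) (Finset.HasAntidiagonal.mem_antidiagonal.mpr rfl) ?_
    rintro ⟨u, v⟩ huv hne
    by_contra h0
    have hu := mem_support_iff.mpr (left_ne_zero_of_mul h0)
    have hv := mem_support_iff.mpr (right_ne_zero_of_mul h0)
    exact irrefl _ (Finset.HasAntidiagonal.mem_antidiagonal.mp huv ▸ key u hu v hv hne)
  refine ⟨mem_support_iff.mpr (hcoeff ▸ mul_ne_zero (mem_support_iff.mp hf.1)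
    (mem_support_iff.mp hg.1)), fun m hm hne => ?_⟩
  obtain ⟨u, hu, v, hv, rfl⟩ := Finset.mem_add.mp (support_mul f g hm)
  exact key u hu v hv fun h => hne (by simp_all)

theorem IsLeadMon.sum_le (hd : IsLeadMon drlt f d) {m : Fin N →₀ ℕ} (hm : m ∈ f.support) :
    ∑ i, m i ≤ ∑ i, d i :=
  (hd.eq_or_lt hm).elim (fun h => h ▸ le_rfl) sum_le_of_drlt

end LeadingMonomial

section SplitVariable

variable {R : Type*} [CommSemiring R] {σ : Type*} {i : σ} {p : MvPolynomial σ R}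

theorem mem_supported_compl_singleton_iff :
    p ∈ supported R {i}ᶜ ↔ ∀ m ∈ p.support, m i = 0 := by
  classical
  simp only [mem_supported, Set.subset_compl_singleton_iff, Finset.mem_coe,
    mem_vars_iff_mem_support, not_exists, not_and, Finsupp.notMem_support_iff]

theorem exists_eq_add_mul_X (p : MvPolynomial σ R) (i : σ) :
    ∃ p₀ ∈ supported R {i}ᶜ, ∃ p₁, p = p₀ + p₁ * X i := by
  classical
  refine ⟨p.modMonomial (Finsupp.single i 1), ?_, p.divMonomial (Finsupp.single i 1), ?_⟩
  · refine mem_supported_compl_singleton_iff.mpr fun m hm => ?_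
    by_contra hmi
    exact mem_support_iff.mp hm
      (coeff_modMonomial_of_le _ (Finsupp.single_le_iff.mpr (Nat.one_le_iff_ne_zero.mpr hmi)))
  · conv_lhs => rw [← divMonomial_add_modMonomial p (Finsupp.single i 1)]
    rw [← X, add_comm, mul_comm]

theorem coeff_add_mul_X_of_apply_eq_zero (r : MvPolynomial σ R) {m : σ →₀ ℕ}
    (hm : m i = 0) :
    coeff m (p + r * X i) = coeff m p := by
  classical
  rw [coeff_add, mul_comm, coeff_X_mul', if_neg (Finsupp.notMem_support_iff.mpr hm), add_zero]

theorem coeff_single_add_add_mul_X (hp : p ∈ supported R {i}ᶜ) (r : MvPolynomial σ R)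
    (m : σ →₀ ℕ) : coeff (m + Finsupp.single i 1) (p + r * X i) = coeff m r := by
  rw [coeff_add, coeff_mul_X, notMem_support_iff.mp fun h => ?_, zero_add]
  simpa using mem_supported_compl_singleton_iff.mp hp _ h

end SplitVariable

section SplitVariableLeadingMonomial

variable {K : Type*} [Field K] {N : ℕ} {i : Fin N} {p p₁ : MvPolynomial (Fin N) K}
  {d e : Fin N →₀ ℕ}

theorem IsLeadMon.of_add_mul_X {lt : (Fin N →₀ ℕ) → (Fin N →₀ ℕ) → Prop}
    (hp : p ∈ supported K {i}ᶜ) {r : MvPolynomial (Fin N) K} (h : IsLeadMon lt (p + r * X i) d)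
    (hd : d i = 0) : IsLeadMon lt p d := by
  have hsupp : ∀ m, m i = 0 → (m ∈ (p + r * X i).support ↔ m ∈ p.support) := fun m hm => by
    rw [mem_support_iff, mem_support_iff, coeff_add_mul_X_of_apply_eq_zero r hm]
  exact ⟨(hsupp d hd).mp h.1, fun m hm => h.2 m
    ((hsupp m (mem_supported_compl_singleton_iff.mp hp m hm)).mpr hm)⟩

theorem IsLeadMon.of_add_add_mul_X_mul_X (hp : p ∈ supported K {i}ᶜ)
    (hp₁ : p₁ ∈ supported K {i}ᶜ) {r : MvPolynomial (Fin N) K}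
    (h : IsLeadMon drlt (p + (p₁ + r * X i) * X i) (e + Finsupp.single i 1)) (he : e i = 0) :
    IsLeadMon drlt p₁ e := by
  have hsupp : ∀ m, m i = 0 →
      (m + Finsupp.single i 1 ∈ (p + (p₁ + r * X i) * X i).support ↔ m ∈ p₁.support) :=
    fun m hm => by
      rw [mem_support_iff, mem_support_iff, coeff_single_add_add_mul_X hp,
        coeff_add_mul_X_of_apply_eq_zero r hm]
  refine ⟨(hsupp e he).mp h.1, fun m hm hne => ?_⟩
  have hm' := (hsupp m (mem_supported_compl_singleton_iff.mp hp₁ m hm)).mpr hm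
  exact (drlt_add_right_iff _).mp (h.2 _ hm' fun h => hne (add_right_cancel h))

end SplitVariableLeadingMonomial

section Conic

variable {K : Type*} [Field K]

noncomputable def conic : MvPolynomial (Fin 4) K := X 0 * X 2 - X 1 ^ 2

/-- The parametrization `(x, y, z) ↦ (s², st, t²)` of the conic; sending `w` to `1` makes it map
monomials to monomials, and it is only applied to `w`-free polynomials. -/
noncomputable def veronese : MvPolynomial (Fin 4) K →ₐ[K] MvPolynomial (Fin 2) K :=
  aeval ![X 0 ^ 2, X 0 * X 1, X 1 ^ 2, 1]

noncomputable def veroneseExp (m : Fin 4 →₀ ℕ) : Fin 2 →₀ ℕ :=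
  Finsupp.single 0 (2 * m 0 + m 1) + Finsupp.single 1 (m 1 + 2 * m 2)

@[simp]
theorem veroneseExp_apply_zero (m : Fin 4 →₀ ℕ) : veroneseExp m 0 = 2 * m 0 + m 1 := by
  simp [veroneseExp]

@[simp]
theorem veroneseExp_apply_one (m : Fin 4 →₀ ℕ) : veroneseExp m 1 = m 1 + 2 * m 2 := by
  simp [veroneseExp]

theorem conic_mem_supported : (conic : MvPolynomial (Fin 4) K) ∈ supported K {3}ᶜ :=
  sub_mem (mul_mem (X_mem_supported.mpr (by decide)) (X_mem_supported.mpr (by decide)))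
    (pow_mem (X_mem_supported.mpr (by decide)) 2)

theorem veronese_monomial (m : Fin 4 →₀ ℕ) (c : K) :
    veronese (monomial m c) = monomial (veroneseExp m) c := by
  rw [veronese, aeval_monomial, Finsupp.prod_fintype _ _ fun _ => pow_zero _, Fin.prod_univ_four,
    monomial_eq, Finsupp.prod_fintype _ _ fun _ => pow_zero _, Fin.prod_univ_two]
  simp only [Matrix.cons_val, one_pow, mul_one, algebraMap_eq, veroneseExp_apply_zero,
    veroneseExp_apply_one]
  ring

theorem veronese_conic : veronese (conic : MvPolynomial (Fin 4) K) = 0 := by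
  simp [conic, veronese]
  ring

theorem veronese_X_zero_pow (k : ℕ) :
    veronese (X 0 ^ k : MvPolynomial (Fin 4) K) = monomial (Finsupp.single 0 (2 * k)) 1 := by
  rw [X_pow_eq_monomial, veronese_monomial]
  congr 2
  ext j
  fin_cases j <;> simp

theorem veronese_X_two_pow (k : ℕ) :
    veronese (X 2 ^ k : MvPolynomial (Fin 4) K) = monomial (Finsupp.single 1 (2 * k)) 1 := by
  rw [X_pow_eq_monomial, veronese_monomial]
  congr 2
  ext j
  fin_cases j <;> simp

theorem coeff_veronese (h : MvPolynomial (Fin 4) K) (μ : Fin 2 →₀ ℕ) :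
    coeff μ (veronese h) = ∑ m ∈ h.support with veroneseExp m = μ, coeff m h := by
  classical
  conv_lhs => rw [h.as_sum, map_sum]
  simp only [veronese_monomial, coeff_sum, coeff_monomial, Finset.sum_ite, Finset.sum_const_zero,
    add_zero]

theorem exists_veroneseExp_eq_of_mem_support {h : MvPolynomial (Fin 4) K} {μ : Fin 2 →₀ ℕ}
    (hμ : μ ∈ (veronese h).support) : ∃ m ∈ h.support, veroneseExp m = μ := by
  rw [mem_support_iff, coeff_veronese] at hμ
  obtain ⟨m, hm, -⟩ := Finset.exists_ne_zero_of_sum_ne_zero hμ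
  exact ⟨m, (Finset.mem_filter.mp hm).1, (Finset.mem_filter.mp hm).2⟩

theorem drlt_of_veroneseExp_eq {m m' : Fin 4 →₀ ℕ} (hm : m 3 = 0) (hm' : m' 3 = 0)
    (hm1 : m 1 ≤ 1) (heq : veroneseExp m' = veroneseExp m) (hne : m' ≠ m) : drlt m m' := by
  have h0 := DFunLike.congr_fun heq 0
  have h1 := DFunLike.congr_fun heq 1
  simp only [veroneseExp_apply_zero, veroneseExp_apply_one] at h0 h1
  have hy : m' 1 ≠ m 1 := fun hy => hne <| by
    ext j
    fin_cases j <;> simp <;> omega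
  refine Or.inr ⟨by simp only [Fin.sum_univ_four]; omega, 2, by omega, fun j hj => ?_⟩
  obtain rfl : j = 3 := by omega
  rw [hm, hm']

theorem veroneseExp_mem_support_of_isLeadMon {h : MvPolynomial (Fin 4) K}
    (hh : h ∈ supported K {3}ᶜ) {m : Fin 4 →₀ ℕ} (hm : IsLeadMon drlt h m)
    (hm1 : m 1 ≤ 1) :
    veroneseExp m ∈ (veronese h).support := by
  have hw := mem_supported_compl_singleton_iff.mp hh
  have hfibre : (h.support.filter fun m' => veroneseExp m' = veroneseExp m) = {m} := by
    refine Finset.eq_singleton_iff_unique_mem.mpr ⟨Finset.mem_filter.mpr ⟨hm.1, rfl⟩, ?_⟩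
    intro m' hm'
    obtain ⟨hm', heq⟩ := Finset.mem_filter.mp hm'
    by_contra hne
    exact asymm (hm.2 m' hm' hne) (drlt_of_veroneseExp_eq (hw m hm.1) (hw m' hm') hm1 heq hne)
  rw [mem_support_iff, coeff_veronese, hfibre, Finset.sum_singleton]
  exact mem_support_iff.mp hm.1

theorem isLeadMon_conic : IsLeadMon drlt (conic : MvPolynomial (Fin 4) K) (Finsupp.single 1 2) := by
  have hxz : (X 0 * X 2 : MvPolynomial (Fin 4) K)
      = monomial (Finsupp.single 0 1 + Finsupp.single 2 1) 1 := by
    rw [X, X, monomial_mul, one_mul]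
  rw [conic, hxz, X_pow_eq_monomial, ← neg_add_eq_sub]
  refine (isLeadMon_monomial one_ne_zero).neg.add (isLeadMon_monomial one_ne_zero)
    (Or.inr ⟨by simp [Fin.sum_univ_four], 2, by simp, fun j hj => ?_⟩)
  obtain rfl : j = 3 := by omega
  simp

end Conic

section InitialIdeal

variable {K : Type*} [Field K] {N : ℕ} {lt : (Fin N →₀ ℕ) → (Fin N →₀ ℕ) → Prop}
  {M : Set (Fin N →₀ ℕ)}

theorem initialIdeal_eq_span_image {I : Ideal (MvPolynomial (Fin N) K)}
    (hI : ∀ f ∈ I, ∀ d, IsLeadMon lt f d → ∃ d' ∈ M, d' ≤ d)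
    (hM : ∀ d ∈ M, ∃ f ∈ I, IsLeadMon lt f d) :
    initialIdeal lt I = Ideal.span ((fun d => monomial d (1 : K)) '' M) := by
  refine le_antisymm (Ideal.span_le.mpr ?_) (Ideal.span_le.mpr ?_)
  · rintro _ ⟨f, hf, -, d, hd, rfl⟩
    obtain ⟨d', hd', hle⟩ := hI f hf d hd
    rw [show monomial d (1 : K) = monomial (d - d') 1 * monomial d' 1 by
      rw [monomial_mul, mul_one, tsub_add_cancel_of_le hle]]
    exact Ideal.mul_mem_left _ _ (Ideal.subset_span ⟨d', hd', rfl⟩)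
  · rintro _ ⟨d, hd, rfl⟩
    obtain ⟨f, hf, hfd⟩ := hM d hd
    exact Ideal.subset_span ⟨f, hf, hfd.ne_zero, d, hfd, rfl⟩

theorem setOf_isLeadMon_eq_image [Std.Asymm lt] {G : Set (MvPolynomial (Fin N) K)}
    (hG : ∀ g ∈ G, ∃ d ∈ M, IsLeadMon lt g d) (hM : ∀ d ∈ M, ∃ g ∈ G, IsLeadMon lt g d) :
    {m | ∃ g ∈ G, ∃ d, IsLeadMon lt g d ∧ m = monomial d 1}
      = (fun d => monomial d (1 : K)) '' M := by
  ext m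
  constructor
  · rintro ⟨g, hg, d, hgd, rfl⟩
    obtain ⟨d', hd', hgd'⟩ := hG g hg
    exact ⟨d', hd', by rw [hgd.unique hgd']⟩
  · rintro ⟨d, hd, rfl⟩
    obtain ⟨g, hg, hgd⟩ := hM d hd
    exact ⟨g, hg, d, hgd, rfl⟩

end InitialIdeal

section DoubleConic

variable {K : Type*} [Field K]

noncomputable def doubleConicGens (b : ℕ) : Set (MvPolynomial (Fin 4) K) :=
  {X 3 ^ 2, X 3 * conic, conic ^ 2, X 0 ^ (b - 1) * conic - X 2 ^ b * X 3}

def doubleConicLeads (b : ℕ) : Set (Fin 4 →₀ ℕ) :=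
  {Finsupp.single 3 2, Finsupp.single 1 2 + Finsupp.single 3 1, Finsupp.single 1 4,
    Finsupp.single 0 (b - 1) + Finsupp.single 1 2}

theorem isLeadMon_doubleConicGens (b : ℕ) :
    IsLeadMon drlt (X 3 ^ 2 : MvPolynomial (Fin 4) K) (Finsupp.single 3 2) ∧
    IsLeadMon drlt (X 3 * conic : MvPolynomial (Fin 4) K)
      (Finsupp.single 1 2 + Finsupp.single 3 1) ∧
    IsLeadMon drlt (conic ^ 2 : MvPolynomial (Fin 4) K) (Finsupp.single 1 4) ∧
    IsLeadMon drlt (X 0 ^ (b - 1) * conic - X 2 ^ b * X 3 : MvPolynomial (Fin 4) K)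
      (Finsupp.single 0 (b - 1) + Finsupp.single 1 2) := by
  have hX (i : Fin 4) (k : ℕ) :
      IsLeadMon drlt (X i ^ k : MvPolynomial (Fin 4) K) (Finsupp.single i k) := by
    rw [X_pow_eq_monomial]
    exact isLeadMon_monomial one_ne_zero
  refine ⟨hX 3 2, ?_, ?_, ?_⟩
  · simpa [add_comm] using (hX 3 1).mul drlt_add_right isLeadMon_conic
  · simpa [pow_two, ← Finsupp.single_add] using
      isLeadMon_conic.mul drlt_add_right isLeadMon_conic
  · rw [sub_eq_add_neg]
    refine ((hX 0 (b - 1)).mul drlt_add_right isLeadMon_conic).add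
      (by simpa using ((hX 2 b).mul drlt_add_right (hX 3 1)).neg) ?_
    refine drlt_of_sum_le_of_apply_last_lt (n := 3) ?_ (by simp)
    simp [Fin.sum_univ_four]
    omega

theorem exists_isLeadMon_mem_doubleConicLeads (b : ℕ) :
    ∀ g ∈ (doubleConicGens b : Set (MvPolynomial (Fin 4) K)),
      ∃ d ∈ doubleConicLeads b, IsLeadMon drlt g d := by
  obtain ⟨h₁, h₂, h₃, h₄⟩ := isLeadMon_doubleConicGens (K := K) b
  rintro g (rfl | rfl | rfl | rfl)
  · exact ⟨_, by simp [doubleConicLeads], h₁⟩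
  · exact ⟨_, by simp [doubleConicLeads], h₂⟩
  · exact ⟨_, by simp [doubleConicLeads], h₃⟩
  · exact ⟨_, by simp [doubleConicLeads], h₄⟩

theorem exists_mem_doubleConicGens_isLeadMon (b : ℕ) :
    ∀ d ∈ doubleConicLeads b,
      ∃ g ∈ (doubleConicGens b : Set (MvPolynomial (Fin 4) K)), IsLeadMon drlt g d := by
  obtain ⟨h₁, h₂, h₃, h₄⟩ := isLeadMon_doubleConicGens (K := K) b
  rintro d (rfl | rfl | rfl | rfl)
  · exact ⟨_, by simp [doubleConicGens], h₁⟩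
  · exact ⟨_, by simp [doubleConicGens], h₂⟩
  · exact ⟨_, by simp [doubleConicGens], h₃⟩
  · exact ⟨_, by simp [doubleConicGens], h₄⟩

theorem exists_eq_of_mem_span_doubleConicGens {b : ℕ} {f : MvPolynomial (Fin 4) K}
    (hf : f ∈ Ideal.span (doubleConicGens b)) :
    ∃ B ∈ supported K {3}ᶜ, ∃ C ∈ supported K {3}ᶜ, ∃ D ∈ supported K {3}ᶜ, ∃ F,
      f = conic * (C * conic + D * X 0 ^ (b - 1))
        + (B * conic - D * X 2 ^ b + F * X 3) * X 3 := by
  obtain ⟨a₁, f₂, hf₂, rfl⟩ := Ideal.mem_span_insert.mp hf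
  obtain ⟨a₂, f₃, hf₃, rfl⟩ := Ideal.mem_span_insert.mp hf₂
  obtain ⟨a₃, f₄, hf₄, rfl⟩ := Ideal.mem_span_insert.mp hf₃
  obtain ⟨a₄, rfl⟩ := Ideal.mem_span_singleton'.mp hf₄
  obtain ⟨a₂₀, h₂₀, a₂₁, rfl⟩ := exists_eq_add_mul_X a₂ 3
  obtain ⟨a₃₀, h₃₀, a₃', rfl⟩ := exists_eq_add_mul_X a₃ 3
  obtain ⟨a₃₁, h₃₁, a₃₂, rfl⟩ := exists_eq_add_mul_X a₃' 3
  obtain ⟨a₄₀, h₄₀, a₄', rfl⟩ := exists_eq_add_mul_X a₄ 3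
  obtain ⟨a₄₁, h₄₁, a₄₂, rfl⟩ := exists_eq_add_mul_X a₄' 3
  refine ⟨a₂₀ + a₃₁ * conic + a₄₁ * X 0 ^ (b - 1),
    add_mem (add_mem h₂₀ (mul_mem h₃₁ conic_mem_supported))
      (mul_mem h₄₁ (pow_mem (X_mem_supported.mpr (by decide)) _)),
    a₃₀, h₃₀, a₄₀, h₄₀,
    a₁ + a₂₁ * conic + a₃₂ * conic ^ 2 + a₄₂ * (X 0 ^ (b - 1) * conic - X 2 ^ b * X 3)
      - a₄₁ * X 2 ^ b, ?_⟩
  ring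

section LeadingMonomialCases

variable {B C D : MvPolynomial (Fin 4) K} (hB : B ∈ supported K {3}ᶜ)
  (hC : C ∈ supported K {3}ᶜ) (hD : D ∈ supported K {3}ᶜ)

include hC hD in
theorem mul_conic_add_mem_supported (k : ℕ) :
    C * conic + D * X 0 ^ k ∈ supported K {3}ᶜ :=
  add_mem (mul_mem hC conic_mem_supported)
    (mul_mem hD (pow_mem (X_mem_supported.mpr (by decide)) _))

include hB hD in
theorem mul_conic_sub_mem_supported (k : ℕ) :
    B * conic - D * X 2 ^ k ∈ supported K {3}ᶜ :=
  sub_mem (mul_mem hB conic_mem_supported)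
    (mul_mem hD (pow_mem (X_mem_supported.mpr (by decide)) _))

include hC hD in
theorem le_of_isLeadMon_of_apply_three_eq_zero {k : ℕ} {r : MvPolynomial (Fin 4) K}
    {d : Fin 4 →₀ ℕ} (hd : IsLeadMon drlt (conic * (C * conic + D * X 0 ^ k) + r * X 3) d)
    (hd3 : d 3 = 0) :
    Finsupp.single 1 4 ≤ d ∨ Finsupp.single 0 k + Finsupp.single 1 2 ≤ d := by
  set g := C * conic + D * X 0 ^ k
  have hg := mul_conic_add_mem_supported hC hD k
  replace hd := hd.of_add_mul_X (mul_mem conic_mem_supported hg) hd3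
  obtain ⟨m, hm⟩ := exists_isLeadMon (lt := drlt) (right_ne_zero_of_mul hd.ne_zero)
  obtain rfl := hd.unique (isLeadMon_conic.mul drlt_add_right hm)
  by_cases hy : 2 ≤ m 1
  · exact Or.inl (Finsupp.single_le_iff.mpr (by simp; omega))
  by_cases hx : k ≤ m 0
  · exact Or.inr (add_comm (Finsupp.single 1 2) m ▸
      add_le_add_left (Finsupp.single_le_iff.mpr hx) _)
  have hmem := veroneseExp_mem_support_of_isLeadMon hg hm (by omega)
  have hgv : veronese g = veronese D * monomial (Finsupp.single 0 (2 * k)) 1 := by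
    simp [g, veronese_conic, veronese_X_zero_pow]
  rw [hgv, mem_support_iff, coeff_mul_monomial'] at hmem
  have hle := Finsupp.single_le_iff.mp (of_not_not fun h => hmem (if_neg h))
  simp only [veroneseExp_apply_zero] at hle
  omega

include hB hC hD in
theorem exists_mem_support_sum_le_add_one {b : ℕ} {e : Fin 4 →₀ ℕ}
    (he : IsLeadMon drlt (B * conic - D * X 2 ^ b) e) (he1 : e 1 ≤ 1) :
    ∃ m ∈ (C * conic + D * X 0 ^ (b - 1)).support, ∑ i, e i ≤ ∑ i, m i + 1 := by
  have hf₁ := mul_conic_sub_mem_supported hB hD b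
  have hmem := veroneseExp_mem_support_of_isLeadMon hf₁ he he1
  have hf₁v : veronese (B * conic - D * X 2 ^ b)
      = -(veronese D * monomial (Finsupp.single 1 (2 * b)) 1) := by
    simp [veronese_conic, veronese_X_two_pow]
  rw [hf₁v, support_neg, mem_support_iff, coeff_mul_monomial'] at hmem
  have hle : Finsupp.single 1 (2 * b) ≤ veroneseExp e := of_not_not fun h => hmem (if_neg h)
  rw [if_pos hle, mul_one] at hmem
  have hgv : veronese (C * conic + D * X 0 ^ (b - 1))
      = veronese D * monomial (Finsupp.single 0 (2 * (b - 1))) 1 := by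
    simp [veronese_conic, veronese_X_zero_pow]
  have hmem' : veroneseExp e - Finsupp.single 1 (2 * b) + Finsupp.single 0 (2 * (b - 1))
      ∈ (veronese (C * conic + D * X 0 ^ (b - 1))).support := by
    rwa [hgv, mem_support_iff, coeff_mul_monomial, mul_one]
  obtain ⟨m, hm, hme⟩ := exists_veroneseExp_eq_of_mem_support hmem'
  refine ⟨m, hm, ?_⟩
  have h0 := DFunLike.congr_fun hme 0
  have h1 := DFunLike.congr_fun hme 1
  have hle1 := Finsupp.single_le_iff.mp hle
  have he3 := mem_supported_compl_singleton_iff.mp hf₁ e he.1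
  have hm3 := mem_supported_compl_singleton_iff.mp (mul_conic_add_mem_supported hC hD _) m hm
  simp [Fin.sum_univ_four] at h0 h1 hle1 ⊢
  omega

include hB hC hD in
theorem le_of_isLeadMon_of_apply_three_eq_one {b : ℕ} {F : MvPolynomial (Fin 4) K}
    {d : Fin 4 →₀ ℕ} (hd : IsLeadMon drlt (conic * (C * conic + D * X 0 ^ (b - 1))
      + (B * conic - D * X 2 ^ b + F * X 3) * X 3) d) (hd3 : d 3 = 1) :
    Finsupp.single 1 2 + Finsupp.single 3 1 ≤ d := by
  set g := C * conic + D * X 0 ^ (b - 1)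
  have hg := mul_conic_add_mem_supported hC hD (b - 1)
  have hqg := mul_mem conic_mem_supported hg
  have hf₁ := mul_conic_sub_mem_supported hB hD b
  obtain ⟨e, rfl⟩ : ∃ e, d = e + Finsupp.single 3 1 :=
    ⟨d - Finsupp.single 3 1, (tsub_add_cancel_of_le (Finsupp.single_le_iff.mpr hd3.ge)).symm⟩
  have he3 : e 3 = 0 := by simpa using hd3
  refine add_le_add_left (Finsupp.single_le_iff.mpr ?_) _
  by_contra! hy
  obtain ⟨m, hm, hdeg⟩ := exists_mem_support_sum_le_add_one hB hC hD
    (hd.of_add_add_mul_X_mul_X hqg hf₁ he3) (by omega)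
  obtain ⟨mg, hmg⟩ := exists_isLeadMon (lt := drlt) (f := g) (support_nonempty.mp ⟨m, hm⟩)
  have hlead := isLeadMon_conic.mul drlt_add_right hmg
  have hmg3 := mem_supported_compl_singleton_iff.mp hg mg hmg.1
  have hmem : Finsupp.single 1 2 + mg
      ∈ (conic * g + (B * conic - D * X 2 ^ b + F * X 3) * X 3).support := by
    rw [mem_support_iff, coeff_add_mul_X_of_apply_eq_zero _ (by simpa using hmg3)]
    exact mem_support_iff.mp hlead.1
  have hlt := sum_lt_of_drlt_of_apply_last_lt (n := 3)
    (hd.2 _ hmem fun h => by simpa [hmg3] using DFunLike.congr_fun h 3) (by simp [hmg3, he3])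
  have := hmg.sum_le hm
  simp [Fin.sum_univ_four] at hlt hdeg this
  omega

end LeadingMonomialCases

theorem exists_le_of_isLeadMon_of_mem_span {b : ℕ} {f : MvPolynomial (Fin 4) K}
    (hf : f ∈ Ideal.span (doubleConicGens b)) {d : Fin 4 →₀ ℕ} (hd : IsLeadMon drlt f d) :
    ∃ d' ∈ doubleConicLeads b, d' ≤ d := by
  obtain ⟨B, hB, C, hC, D, hD, F, rfl⟩ := exists_eq_of_mem_span_doubleConicGens hf
  rcases (by omega : d 3 = 0 ∨ d 3 = 1 ∨ 2 ≤ d 3) with hd3 | hd3 | hd3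
  · rcases le_of_isLeadMon_of_apply_three_eq_zero hC hD hd hd3 with h | h
    · exact ⟨_, by simp [doubleConicLeads], h⟩
    · exact ⟨_, by simp [doubleConicLeads], h⟩
  · exact ⟨_, by simp [doubleConicLeads],
      le_of_isLeadMon_of_apply_three_eq_one hB hC hD hd hd3⟩
  · exact ⟨_, by simp [doubleConicLeads], Finsupp.single_le_iff.mpr hd3⟩

end DoubleConic

theorem stmt12_general {K : Type*} [Field K] (b : ℕ) :
    let x : MvPolynomial (Fin 4) K := X 0
    let y : MvPolynomial (Fin 4) K := X 1
    let z : MvPolynomial (Fin 4) K := X 2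
    let w : MvPolynomial (Fin 4) K := X 3
    let G : Set (MvPolynomial (Fin 4) K) :=
      {w ^ 2, w * (x * z - y ^ 2), (x * z - y ^ 2) ^ 2,
        x ^ (b - 1) * (x * z - y ^ 2) - z ^ b * w}
    initialIdeal drlt (Ideal.span G)
        = Ideal.span {m | ∃ g ∈ G, ∃ d, IsLeadMon drlt g d ∧ m = monomial d 1}
    ∧
    initialIdeal drlt (Ideal.span G)
        = Ideal.span {w ^ 2, y ^ 2 * w, y ^ 4, x ^ (b - 1) * y ^ 2} := by
  intro x y z w G
  have hinit : initialIdeal drlt (Ideal.span G)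
      = Ideal.span ((fun d => monomial d 1) '' doubleConicLeads b) :=
    initialIdeal_eq_span_image (fun f hf d hd => exists_le_of_isLeadMon_of_mem_span hf hd)
      fun d hd => (exists_mem_doubleConicGens_isLeadMon b d hd).imp fun g hg =>
        ⟨Ideal.subset_span hg.1, hg.2⟩
  have hleads : {m | ∃ g ∈ G, ∃ d, IsLeadMon drlt g d ∧ m = monomial d 1}
      = (fun d => monomial d (1 : K)) '' doubleConicLeads b :=
    setOf_isLeadMon_eq_image (G := G) (exists_isLeadMon_mem_doubleConicLeads b)
      (exists_mem_doubleConicGens_isLeadMon b)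
  refine ⟨by rw [hinit, hleads], hinit.trans ?_⟩
  simp only [doubleConicLeads, Set.image_insert_eq, Set.image_singleton, monomial_single_add,
    ← X_pow_eq_monomial, pow_one, x, y, w]

/-- In `K[x,y,z,w]` (with `x = X 0`, `y = X 1`, `z = X 2`, `w = X 3`), for `b ≥ 1` the
polynomials `w², w(xz−y²), (xz−y²)², x^{b−1}(xz−y²) − z^b w` form a Gröbner basis of the
ideal `I_X` they generate (degrevlex, `x > y > z > w`), and
`in(I_X) = ⟨w², y²w, y⁴, x^{b−1}y²⟩`. -/
theorem stmt12 {K : Type*} [Field K] [CharZero K] (b : ℕ) (hb : 1 ≤ b) :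
    let x : MvPolynomial (Fin 4) K := X 0
    let y : MvPolynomial (Fin 4) K := X 1
    let z : MvPolynomial (Fin 4) K := X 2
    let w : MvPolynomial (Fin 4) K := X 3
    let G : Set (MvPolynomial (Fin 4) K) :=
      {w ^ 2, w * (x * z - y ^ 2), (x * z - y ^ 2) ^ 2,
        x ^ (b - 1) * (x * z - y ^ 2) - z ^ b * w}
    initialIdeal drlt (Ideal.span G)
        = Ideal.span {m | ∃ g ∈ G, ∃ d, IsLeadMon drlt g d ∧ m = monomial d 1}
    ∧
    initialIdeal drlt (Ideal.span G)
        = Ideal.span {w ^ 2, y ^ 2 * w, y ^ 4, x ^ (b - 1) * y ^ 2} :=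
  stmt12_general b
end

section
/- In R = K[x,y,z,w], let b ≥ 1 and consider the ideal I_X = ⟨w², w(xz−y²), (xz−y²)², x^{b−1}(xz−y²) − z^b w⟩. Every syzygy (g_1,g_2,g_3,g_4) ∈ R⁴ of these four generators (i.e., w²g_1 + w(xz−y²)g_2 + (xz−y²)²g_3 + (x^{b−1}(xz−y²) − z^b w)g_4 = 0) is an R-linear combination of the columns of the matrix with rows: (−(xz−y²), 0, −z^b, 0), (w, −(xz−y²), x^{b−1}, z^b), (0, w, 0, −x^{b−1}), (0, 0, −w, xz−y²). -/
/-!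
Write `q = xz − y²`, `a = x^{b−1}`, `c = z^b`. The column span describes the syzygies as soon as
`w` is a nonzerodivisor, `q` is a nonzerodivisor modulo `w` and `a` is a nonzerodivisor modulo
`(w, q)`, whatever `c` is. Given a syzygy, `w` divides `q (q g₃ + a g₄)`, hence `q g₃ + a g₄ = w u`;
then `a g₄ ∈ (w, q)` gives `g₄ = w t + q h`, and cancelling `w` and `q` in turn forces the other
coordinates into the column span. In `K[x,y,z,w]` these conditions come from the primality of the
variables `w` and `x`, after reducing modulo `w` by setting `w = 0`.
-/

open MvPolynomial

section Syzygy

variable {R : Type*} [CommRing R] {w q a c : R}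

theorem exists_syzygy_combination_of_regular (hw : IsLeftRegular w)
    (hq : ∀ r, w ∣ q * r → w ∣ r)
    (ha : ∀ r, a * r ∈ Ideal.span {w, q} → r ∈ Ideal.span {w, q})
    {g1 g2 g3 g4 : R}
    (hsyz : w ^ 2 * g1 + w * q * g2 + q ^ 2 * g3 + (a * q - c * w) * g4 = 0) :
    ∃ c1 c2 c3 c4 : R,
      g1 = -q * c1 + (-c) * c3 ∧
      g2 = w * c1 + (-q) * c2 + a * c3 + c * c4 ∧
      g3 = w * c2 + (-a) * c4 ∧
      g4 = (-w) * c3 + q * c4 := by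
  obtain ⟨u, hu⟩ : w ∣ q * g3 + a * g4 :=
    hq _ ⟨-(w * g1 + q * g2 - c * g4), by linear_combination hsyz⟩
  obtain ⟨t, h, hg4⟩ := Ideal.mem_span_pair.mp <|
    ha g4 (Ideal.mem_span_pair.mpr ⟨u, -g3, by linear_combination -hu⟩)
  obtain ⟨c2, hc2⟩ : w ∣ g3 + a * h :=
    hq _ ⟨u - a * t, by linear_combination hu + a * hg4⟩
  have hu' : u = q * c2 + a * t :=
    hw (by linear_combination -hu + q * hc2 - a * hg4)
  have hsyz' : w * g1 + q * g2 + q * u - c * g4 = 0 :=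
    hw (by linear_combination hsyz - q * hu)
  obtain ⟨d, hd⟩ : w ∣ g2 + q * c2 + a * t - c * h :=
    hq _ ⟨c * t - g1, by linear_combination hsyz' - q * hu' - c * hg4⟩
  have hg1 : g1 = -q * d + c * t :=
    hw (by linear_combination hsyz' - q * hu' - c * hg4 - q * hd)
  refine ⟨d, c2, -t, h, ?_, ?_, ?_, ?_⟩
  · linear_combination hg1
  · linear_combination hd
  · linear_combination hc2
  · linear_combination -hg4

end Syzygy

namespace MvPolynomial

variable {σ R : Type*} [CommRing R]

theorem X_dvd_sub_bind₁_update_zero [DecidableEq σ] (i : σ) (p : MvPolynomial σ R) :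
    X i ∣ p - bind₁ (Function.update X i 0) p := by
  let I := Ideal.span {(X i : MvPolynomial σ R)}
  have hmk : (Ideal.Quotient.mkₐ R I).comp (bind₁ (Function.update X i 0)) =
      Ideal.Quotient.mkₐ R I := by
    refine algHom_ext fun j => ?_
    rcases eq_or_ne j i with rfl | hji
    · simp [I]
    · simp [hji]
  rw [← Ideal.mem_span_singleton, ← Ideal.Quotient.eq]
  simpa [Ideal.Quotient.mkₐ_eq_mk] using (congrArg (· p) hmk).symm

theorem mem_span_X_pair_of_X_pow_mul_mem [DecidableEq σ] [IsDomain R] {i j : σ} (hij : i ≠ j)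
    {q : MvPolynomial σ R} (hq : bind₁ (Function.update X i 0) q = q) (hjq : ¬ X j ∣ q)
    (n : ℕ) (r : MvPolynomial σ R) (hr : X j ^ n * r ∈ Ideal.span {X i, q}) :
    r ∈ Ideal.span {X i, q} := by
  set φ := bind₁ (Function.update (X : σ → MvPolynomial σ R) i 0)
  obtain ⟨s, t, hst⟩ := Ideal.mem_span_pair.mp hr
  have hφ : X j ^ n * φ r = φ t * q := by
    simpa [φ, Function.update_of_ne hij.symm, hq] using congrArg φ hst.symm
  obtain ⟨t', ht'⟩ := X_prime.pow_dvd_of_dvd_mul_right n hjq ⟨_, hφ.symm⟩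
  have hφr : φ r = t' * q :=
    mul_left_cancel₀ (pow_ne_zero n X_prime.ne_zero) (by rw [hφ, ht', mul_assoc])
  obtain ⟨k, hk⟩ := X_dvd_sub_bind₁_update_zero i r
  exact Ideal.mem_span_pair.mpr ⟨k, t', by linear_combination -hk - hφr⟩

end MvPolynomial

theorem stmt13_general {K : Type*} [Field K] (b : ℕ)
    (g1 g2 g3 g4 : MvPolynomial (Fin 4) K)
    (x y z w : MvPolynomial (Fin 4) K)
    (hx : x = X 0) (hy : y = X 1) (hz : z = X 2) (hw : w = X 3)
    (hsyz : w ^ 2 * g1 + w * (x * z - y ^ 2) * g2 + (x * z - y ^ 2) ^ 2 * g3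
      + (x ^ (b - 1) * (x * z - y ^ 2) - z ^ b * w) * g4 = 0) :
    ∃ c1 c2 c3 c4 : MvPolynomial (Fin 4) K,
      g1 = -(x * z - y ^ 2) * c1 + (-(z ^ b)) * c3 ∧
      g2 = w * c1 + (-(x * z - y ^ 2)) * c2 + x ^ (b - 1) * c3 + z ^ b * c4 ∧
      g3 = w * c2 + (-(x ^ (b - 1))) * c4 ∧
      g4 = (-w) * c3 + (x * z - y ^ 2) * c4 := by
  subst hx hy hz hw
  have hwq : ¬ X 3 ∣ (X 0 * X 2 - X 1 ^ 2 : MvPolynomial (Fin 4) K) := fun ⟨_, h⟩ => by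
    simpa using congrArg (eval ![1, 0, 1, 0]) h
  have hxq : ¬ X 0 ∣ (X 0 * X 2 - X 1 ^ 2 : MvPolynomial (Fin 4) K) := fun ⟨_, h⟩ => by
    simpa using congrArg (eval ![0, 1, 0, 0]) h
  have hq : bind₁ (Function.update X 3 0) (X 0 * X 2 - X 1 ^ 2 : MvPolynomial (Fin 4) K) =
      X 0 * X 2 - X 1 ^ 2 := by
    simp [Function.update_of_ne]
  exact exists_syzygy_combination_of_regular
    (fun _ _ h => mul_left_cancel₀ X_prime.ne_zero h)
    (fun _ h => (X_prime.dvd_or_dvd h).resolve_left hwq)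
    (mem_span_X_pair_of_X_pow_mul_mem (by decide) hq hxq (b - 1)) hsyz

/-- Every syzygy of `(w², w(xz−y²), (xz−y²)², x^{b−1}(xz−y²) − z^b w)` in `K[x,y,z,w]`
is an `R`-linear combination of the four columns of the matrix with rows
`(−(xz−y²), 0, −z^b, 0)`, `(w, −(xz−y²), x^{b−1}, z^b)`, `(0, w, 0, −x^{b−1})`,
`(0, 0, −w, xz−y²)`. -/
theorem stmt13 {K : Type*} [Field K] (b : ℕ) (hb : 1 ≤ b)
    (g1 g2 g3 g4 : MvPolynomial (Fin 4) K)
    (x y z w : MvPolynomial (Fin 4) K)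
    (hx : x = X 0) (hy : y = X 1) (hz : z = X 2) (hw : w = X 3)
    (hsyz : w ^ 2 * g1 + w * (x * z - y ^ 2) * g2 + (x * z - y ^ 2) ^ 2 * g3
      + (x ^ (b - 1) * (x * z - y ^ 2) - z ^ b * w) * g4 = 0) :
    ∃ c1 c2 c3 c4 : MvPolynomial (Fin 4) K,
      g1 = -(x * z - y ^ 2) * c1 + (-(z ^ b)) * c3 ∧
      g2 = w * c1 + (-(x * z - y ^ 2)) * c2 + x ^ (b - 1) * c3 + z ^ b * c4 ∧
      g3 = w * c2 + (-(x ^ (b - 1))) * c4 ∧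
      g4 = (-w) * c3 + (x * z - y ^ 2) * c4 :=
  stmt13_general b g1 g2 g3 g4 x y z w hx hy hz hw hsyz
end

section
/- Let R = K[x,y,z,w] and b ≥ 1. The five polynomials w², w(xz−y²), (xz−y²)², x^b(xz−y²) − y z^b w, x^{b−1}y(xz−y²) − z^{b+1}w form a Gröbner basis with respect to the degree reverse lexicographic order with x > y > z > w of the ideal they generate. -/
open MvPolynomial

/-!
Let `φ : K[x,y,z,w] → K[s,t]` be `(x,y,z,w) ↦ (s², st, t², 0)`, the parametrisation of the conic
`xz = y², w = 0`. The five polynomials lie in the ideal `V_b` of those `f` with `φ f = 0` and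
`(φ ∂_w f, φ ∂_z f) = (-t^{2b+1} h, s^{2b+1} h)` for some `h`. Dividing `f ∈ V_b` by them leaves a
remainder in `V_b` whose monomials are standard (divisible by none of the leading monomials
`w², y²w, y⁴, x^b y², x^{b-1} y³`). Since `φ` maps `x^a y^c z^d` to `s^{2a+c} t^{c+2d}`, each
fibre of `φ` contains at most two standard monomials, so `φ f = 0` and the vanishing of the
coefficients of `φ ∂_z f` below `s^{2b+1}` force the `w`-free part of the remainder to vanish;
then `h = 0`, and `φ ∂_w f = 0` kills the part linear in `w`. So the remainder is zero, hence the
leading monomial of every nonzero `f ∈ V_b` is divisible by the leading monomial of a generator.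
-/

noncomputable def MonomialOrder.ofInjective {σ S : Type*} [AddCommMonoid S] [LinearOrder S]
    [IsOrderedAddMonoid S] [WellFoundedLT S] (f : (σ →₀ ℕ) →+ S) (hf : Function.Injective f)
    (hmono : Monotone f) : MonomialOrder σ where
  syn := AddMonoidHom.mrange f
  toSyn := (AddEquiv.ofBijective f.mrangeRestrict
    ⟨fun _ _ h ↦ hf (congrArg Subtype.val h), f.mrangeRestrict_surjective⟩ :)
  toSyn_monotone _ _ h := hmono h

theorem MonomialOrder.ofInjective_toSyn_lt_iff {σ S : Type*} [AddCommMonoid S] [LinearOrder S]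
    [IsOrderedAddMonoid S] [WellFoundedLT S] {f : (σ →₀ ℕ) →+ S} {hf : Function.Injective f}
    {hmono : Monotone f} {a b : σ →₀ ℕ} :
    (ofInjective f hf hmono).toSyn a < (ofInjective f hf hmono).toSyn b ↔ f a < f b :=
  Iff.rfl

/-- Degrevlex with `x > y > z > w` is the lexicographic order on the partial sums
`(a₀ + a₁ + a₂ + a₃, a₀ + a₁ + a₂, a₀ + a₁, a₀)`. -/
def degRevLexKey : (Fin 4 →₀ ℕ) →+ ℕ ×ₗ ℕ ×ₗ ℕ ×ₗ ℕ where
  toFun a := toLex (a 0 + a 1 + a 2 + a 3, toLex (a 0 + a 1 + a 2, toLex (a 0 + a 1, a 0)))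
  map_zero' := rfl
  map_add' a b := by
    simp only [Finsupp.add_apply, add_add_add_comm]
    rfl

theorem degRevLexKey_apply (a : Fin 4 →₀ ℕ) : degRevLexKey a =
    toLex (a 0 + a 1 + a 2 + a 3, toLex (a 0 + a 1 + a 2, toLex (a 0 + a 1, a 0))) :=
  rfl

theorem degRevLexKey_injective : Function.Injective degRevLexKey := by
  intro a b h
  simp only [degRevLexKey_apply, EmbeddingLike.apply_eq_iff_eq, Prod.mk.injEq] at h
  ext i
  fin_cases i <;> simp <;> omega

theorem degRevLexKey_monotone : Monotone degRevLexKey := by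
  intro a b h
  have := h 0; have := h 1; have := h 2; have := h 3
  exact Prod.Lex.toLex_mono ⟨by dsimp; omega, Prod.Lex.toLex_mono ⟨by dsimp; omega,
    Prod.Lex.toLex_mono ⟨by dsimp; omega, h 0⟩⟩⟩

noncomputable def degRevLex : MonomialOrder (Fin 4) :=
  .ofInjective degRevLexKey degRevLexKey_injective degRevLexKey_monotone

theorem degRevLex_lt_iff {a b : Fin 4 →₀ ℕ} : degRevLex.toSyn a < degRevLex.toSyn b ↔
    a 0 + a 1 + a 2 + a 3 < b 0 + b 1 + b 2 + b 3 ∨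
      (a 0 + a 1 + a 2 + a 3 = b 0 + b 1 + b 2 + b 3 ∧
        (a 0 + a 1 + a 2 < b 0 + b 1 + b 2 ∨ (a 0 + a 1 + a 2 = b 0 + b 1 + b 2 ∧
          (a 0 + a 1 < b 0 + b 1 ∨ (a 0 + a 1 = b 0 + b 1 ∧ a 0 < b 0))))) :=
  MonomialOrder.ofInjective_toSyn_lt_iff.trans <| Prod.Lex.toLex_lt_toLex.trans <|
    or_congr_right <| and_congr_right fun _ ↦ Prod.Lex.toLex_lt_toLex.trans <|
      or_congr_right <| and_congr_right fun _ ↦ Prod.Lex.toLex_lt_toLex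

theorem drlt_iff_degRevLex_lt {a b : Fin 4 →₀ ℕ} :
    drlt a b ↔ degRevLex.toSyn a < degRevLex.toSyn b := by
  rw [degRevLex_lt_iff, drlt, Fin.sum_univ_four, Fin.sum_univ_four]
  simp [Fin.forall_fin_succ, Fin.exists_fin_succ]
  omega

theorem isLeadMon_iff {K : Type*} [Field K] {N : ℕ} {m : MonomialOrder (Fin N)}
    {lt : (Fin N →₀ ℕ) → (Fin N →₀ ℕ) → Prop} (hlt : ∀ a b, lt a b ↔ m.toSyn a < m.toSyn b)
    {f : MvPolynomial (Fin N) K} {d : Fin N →₀ ℕ} :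
    IsLeadMon lt f d ↔ f ≠ 0 ∧ m.degree f = d := by
  constructor
  · rintro ⟨hd, hlead⟩
    have hf : f ≠ 0 := by rintro rfl; simp at hd
    refine ⟨hf, by_contra fun hne ↦ ?_⟩
    exact (m.le_degree hd).not_gt ((hlt _ _).mp (hlead _ (m.degree_mem_support hf) hne))
  · rintro ⟨hf, rfl⟩
    exact ⟨m.degree_mem_support hf, fun e he hne ↦ (hlt _ _).mpr <|
      (m.le_degree he).lt_of_ne (m.toSyn.injective.ne hne)⟩

/-- The remainder of `f` on division by `G` lies in `V`, so it vanishes; then the leading term of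
`f` must be that of some `g * q_g`. -/
theorem MonomialOrder.exists_degree_le_of_mem {σ K : Type*} [Field K] {m : MonomialOrder σ}
    {G : Set (MvPolynomial σ K)} (hG0 : 0 ∉ G) {V : Ideal (MvPolynomial σ K)} (hGV : G ⊆ V)
    (hV : ∀ r ∈ V, (∀ c ∈ r.support, ∀ g ∈ G, ¬ m.degree g ≤ c) → r = 0)
    {f : MvPolynomial σ K} (hf : f ∈ V) (hf0 : f ≠ 0) : ∃ g ∈ G, m.degree g ≤ m.degree f := by
  have hunit : ∀ g ∈ G, IsUnit (m.leadingCoeff g) := fun g hg ↦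
    (m.leadingCoeff_ne_zero_iff.mpr (ne_of_mem_of_not_mem hg hG0)).isUnit
  obtain ⟨q, r, hfqr, hdeg, hr⟩ := m.div_set hunit f
  rw [Finsupp.linearCombination_apply, Finsupp.sum] at hfqr
  have hr0 : r = 0 := by
    refine hV r ?_ hr
    rw [eq_sub_of_add_eq' hfqr.symm]
    exact V.sub_mem hf (V.sum_mem fun g _ ↦ V.smul_mem _ (hGV g.2))
  by_contra! hG
  have hcoeff : ∀ g : G, coeff (m.degree f) (q g • (g : MvPolynomial σ K)) = 0 := by
    intro g
    by_cases hq : q g = 0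
    · simp [hq]
    rw [smul_eq_mul, mul_comm]
    refine m.coeff_eq_zero_of_lt ((hdeg g).lt_of_ne fun heq ↦ hG g g.2 ?_)
    rw [← m.toSyn.injective heq, m.degree_mul (ne_of_mem_of_not_mem g.2 hG0) hq]
    exact le_self_add
  rw [hr0, add_zero] at hfqr
  apply m.coeff_degree_ne_zero_iff.mpr hf0
  nth_rw 2 [hfqr]
  rw [coeff_sum]
  exact Finset.sum_eq_zero fun g _ ↦ hcoeff g

theorem initialIdeal_span_eq_of_exists_degree_le {K : Type*} [Field K] {N : ℕ}
    {m : MonomialOrder (Fin N)}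
    {lt : (Fin N →₀ ℕ) → (Fin N →₀ ℕ) → Prop} (hlt : ∀ a b, lt a b ↔ m.toSyn a < m.toSyn b)
    {G : Set (MvPolynomial (Fin N) K)} (hG0 : 0 ∉ G)
    (h : ∀ f ∈ Ideal.span G, f ≠ 0 → ∃ g ∈ G, m.degree g ≤ m.degree f) :
    initialIdeal lt (Ideal.span G)
      = Ideal.span {p | ∃ g ∈ G, ∃ d, IsLeadMon lt g d ∧ p = monomial d 1} := by
  apply le_antisymm
  · rw [initialIdeal, Ideal.span_le]
    rintro _ ⟨f, hf, hf0, d, hd, rfl⟩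
    obtain ⟨-, rfl⟩ := (isLeadMon_iff hlt).mp hd
    obtain ⟨g, hg, hle⟩ := h f hf hf0
    have hlead : IsLeadMon lt g (m.degree g) :=
      (isLeadMon_iff hlt).mpr ⟨ne_of_mem_of_not_mem hg hG0, rfl⟩
    rw [← add_tsub_cancel_of_le hle, ← one_mul (1 : K), ← monomial_mul, one_mul]
    exact Ideal.mul_mem_right _ _ (Ideal.subset_span ⟨g, hg, _, hlead, rfl⟩)
  · refine Ideal.span_mono ?_
    rintro _ ⟨g, hg, d, hd, rfl⟩
    exact ⟨g, Ideal.subset_span hg, ((isLeadMon_iff hlt).mp hd).1, d, hd, rfl⟩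

theorem MvPolynomial.mem_support_of_mem_support_pderiv {σ R : Type*} [CommSemiring R] {i : σ}
    {g : MvPolynomial σ R} {n : σ →₀ ℕ} (hn : n ∈ (pderiv i g).support) :
    n + Finsupp.single i 1 ∈ g.support := by
  rw [mem_support_iff, coeff_pderiv] at hn
  exact mem_support_iff.mpr (left_ne_zero_of_mul hn)

theorem MvPolynomial.coeff_X_pow_mul_eq_zero {σ R : Type*} [CommSemiring R] {i : σ} {m : ℕ}
    {u : σ →₀ ℕ} (hu : u i < m) (p : MvPolynomial σ R) : coeff u (X i ^ m * p) = 0 := by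
  rw [X_pow_eq_monomial, coeff_monomial_mul', if_neg fun h ↦ (h i).not_gt (by simpa using hu)]

namespace DoubleConic

variable {K : Type*} [Field K]

noncomputable def conic : MvPolynomial (Fin 4) K := X 0 * X 2 - X 1 ^ 2

def generators (b : ℕ) : Set (MvPolynomial (Fin 4) K) :=
  {X 3 ^ 2, X 3 * conic, conic ^ 2, X 0 ^ b * conic - X 1 * X 2 ^ b * X 3,
    X 0 ^ (b - 1) * X 1 * conic - X 2 ^ (b + 1) * X 3}

/-- The exponent of `x^a y^c z^d w^e`. -/
noncomputable def exponent (a c d e : ℕ) : Fin 4 →₀ ℕ :=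
  Finsupp.single 0 a + Finsupp.single 1 c + Finsupp.single 2 d + Finsupp.single 3 e

@[simp] theorem exponent_apply (a c d e : ℕ) (i : Fin 4) :
    exponent a c d e i = ![a, c, d, e] i := by
  fin_cases i <;> simp [exponent]

theorem eq_exponent_iff {n : Fin 4 →₀ ℕ} {a c d e : ℕ} :
    n = exponent a c d e ↔ n 0 = a ∧ n 1 = c ∧ n 2 = d ∧ n 3 = e := by
  simp [Finsupp.ext_iff, Fin.forall_fin_succ]

theorem exponent_le_iff {n : Fin 4 →₀ ℕ} {a c d e : ℕ} :
    exponent a c d e ≤ n ↔ a ≤ n 0 ∧ c ≤ n 1 ∧ d ≤ n 2 ∧ e ≤ n 3 := by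
  simp [Finsupp.le_def, Fin.forall_fin_succ]

theorem exponent_add_single_two (a c d e : ℕ) :
    exponent a c d e + Finsupp.single 2 1 = exponent a c (d + 1) e := by
  simp [eq_exponent_iff]

theorem exponent_add_single_three (a c d e : ℕ) :
    exponent a c d e + Finsupp.single 3 1 = exponent a c d (e + 1) := by
  simp [eq_exponent_iff]

theorem degree_X_pow (i : Fin 4) (n : ℕ) :
    degRevLex.degree (X i ^ n : MvPolynomial (Fin 4) K) = Finsupp.single i n := by
  rw [degRevLex.degree_pow, degRevLex.degree_X, Finsupp.smul_single, smul_eq_mul, mul_one]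

theorem degree_conic :
    degRevLex.degree (conic : MvPolynomial (Fin 4) K) = Finsupp.single 1 2 := by
  rw [conic, ← neg_sub, degRevLex.degree_neg, degRevLex.degree_sub_of_lt, degree_X_pow]
  rw [degRevLex_lt_iff]
  simp [degRevLex.degree_mul, degree_X_pow, degRevLex.degree_X]

theorem conic_ne_zero : (conic : MvPolynomial (Fin 4) K) ≠ 0 :=
  degRevLex.ne_zero_of_degree_ne_zero (by simp [degree_conic])

theorem degree_image_generators (b : ℕ) :
    degRevLex.degree '' (generators b : Set (MvPolynomial (Fin 4) K)) =
      {exponent 0 0 0 2, exponent 0 2 0 1, exponent 0 4 0 0, exponent b 2 0 0,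
        exponent (b - 1) 3 0 0} := by
  have h4 : degRevLex.degree (X 0 ^ b * conic - X 1 * X 2 ^ b * X 3 : MvPolynomial (Fin 4) K) =
      exponent b 2 0 0 := by
    rw [degRevLex.degree_sub_of_lt]
    · simp [eq_exponent_iff, degRevLex.degree_mul, conic_ne_zero, degree_X_pow, degree_conic]
    rw [degRevLex_lt_iff]
    simp [degRevLex.degree_mul, conic_ne_zero, degree_X_pow, degRevLex.degree_X, degree_conic]
    omega
  have h5 : degRevLex.degree
      (X 0 ^ (b - 1) * X 1 * conic - X 2 ^ (b + 1) * X 3 : MvPolynomial (Fin 4) K) =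
      exponent (b - 1) 3 0 0 := by
    rw [degRevLex.degree_sub_of_lt]
    · simp [eq_exponent_iff, degRevLex.degree_mul, conic_ne_zero, degree_X_pow,
        degRevLex.degree_X, degree_conic]
    rw [degRevLex_lt_iff]
    simp [degRevLex.degree_mul, conic_ne_zero, degree_X_pow, degRevLex.degree_X, degree_conic]
    omega
  have h1 : degRevLex.degree (X 3 ^ 2 : MvPolynomial (Fin 4) K) = exponent 0 0 0 2 := by
    simp [eq_exponent_iff, degree_X_pow]
  have h2 : degRevLex.degree (X 3 * conic : MvPolynomial (Fin 4) K) = exponent 0 2 0 1 := by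
    simp [eq_exponent_iff, degRevLex.degree_mul, conic_ne_zero, degRevLex.degree_X, degree_conic]
  have h3 : degRevLex.degree (conic ^ 2 : MvPolynomial (Fin 4) K) = exponent 0 4 0 0 := by
    simp [eq_exponent_iff, degRevLex.degree_pow, degree_conic]
  simp only [generators, Set.image_insert_eq, Set.image_singleton, h1, h2, h3, h4, h5]

theorem zero_notMem_generators (b : ℕ) : (0 : MvPolynomial (Fin 4) K) ∉ generators b := by
  intro h
  have := degree_image_generators (K := K) b ▸ Set.mem_image_of_mem degRevLex.degree h
  simp [Finsupp.ext_iff, Fin.forall_fin_succ] at this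

/-- Standard exponents: divisible by none of `w², y²w, y⁴, x^b y², x^{b-1} y³`. -/
def IsStandard (b : ℕ) (n : Fin 4 →₀ ℕ) : Prop :=
  n 3 < 2 ∧ (n 1 < 2 ∨ n 3 = 0) ∧ n 1 < 4 ∧ (n 0 < b ∨ n 1 < 2) ∧ (n 0 + 1 < b ∨ n 1 < 3)

theorem isStandard_of_forall_not_le {b : ℕ} {n : Fin 4 →₀ ℕ}
    (h : ∀ g ∈ generators (K := K) b, ¬ degRevLex.degree g ≤ n) : IsStandard b n := by
  have h' : ∀ D ∈ degRevLex.degree '' generators (K := K) b, ¬ D ≤ n := by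
    rintro _ ⟨g, hg, rfl⟩
    exact h g hg
  simp only [degree_image_generators, Set.mem_insert_iff, Set.mem_singleton_iff,
    forall_eq_or_imp, forall_eq, exponent_le_iff] at h'
  simp only [IsStandard]
  simp at h'
  omega

noncomputable def conicParam : MvPolynomial (Fin 4) K →ₐ[K] MvPolynomial (Fin 2) K :=
  aeval ![X 0 ^ 2, X 0 * X 1, X 1 ^ 2, 0]

theorem conicParam_X (i : Fin 4) :
    conicParam (X i : MvPolynomial (Fin 4) K) = ![X 0 ^ 2, X 0 * X 1, X 1 ^ 2, 0] i :=
  aeval_X _ _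

/-- The ideal `V_b` of the header. -/
def doubleConicIdeal (b : ℕ) : Ideal (MvPolynomial (Fin 4) K) where
  carrier := {f | conicParam f = 0 ∧ ∃ h, conicParam (pderiv 3 f) = -(X 1 ^ (2 * b + 1) * h) ∧
    conicParam (pderiv 2 f) = X 0 ^ (2 * b + 1) * h}
  add_mem' := by
    rintro f g ⟨hf, hf', hfw, hfz⟩ ⟨hg, hg', hgw, hgz⟩
    refine ⟨by simp [hf, hg], hf' + hg', ?_, ?_⟩ <;> simp only [map_add, hfw, hgw, hfz, hgz] <;>
      ring
  zero_mem' := ⟨map_zero _, 0, by simp, by simp⟩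
  smul_mem' := by
    rintro r f ⟨hf, h, hw, hz⟩
    refine ⟨by simp [hf], conicParam r * h, ?_, ?_⟩ <;>
      simp only [smul_eq_mul, Derivation.leibniz, map_add, map_mul, hf, hw, hz] <;> ring

theorem generators_subset_doubleConicIdeal (b : ℕ) (hb : 1 ≤ b) :
    generators b ⊆ (doubleConicIdeal (K := K) b : Set (MvPolynomial (Fin 4) K)) := by
  obtain ⟨b, rfl⟩ := Nat.exists_eq_add_of_le' hb
  rintro g (rfl | rfl | rfl | rfl | rfl)
  · refine ⟨?_, 0, ?_, ?_⟩ <;> simp [conicParam_X, pderiv_X]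
  · refine ⟨?_, 0, ?_, ?_⟩ <;> simp [conic, conicParam_X, pderiv_X]
    ring
  · refine ⟨?_, 0, ?_, ?_⟩ <;> simp [conic, conicParam_X, pderiv_X, -mul_eq_zero] <;> ring
  · refine ⟨?_, X 0, ?_, ?_⟩ <;> simp [conic, conicParam_X, pderiv_X] <;> ring
  · refine ⟨?_, X 1, ?_, ?_⟩ <;> simp [conic, conicParam_X, pderiv_X] <;> ring

noncomputable def conicExp (n : Fin 4 →₀ ℕ) : Fin 2 →₀ ℕ :=
  Finsupp.single 0 (2 * n 0 + n 1) + Finsupp.single 1 (n 1 + 2 * n 2)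

theorem conicExp_eq_iff {n p : Fin 4 →₀ ℕ} :
    conicExp n = conicExp p ↔ 2 * n 0 + n 1 = 2 * p 0 + p 1 ∧ n 1 + 2 * n 2 = p 1 + 2 * p 2 := by
  simp [conicExp, Finsupp.ext_iff, Fin.forall_fin_two, Finsupp.single_apply]

theorem conicParam_monomial (n : Fin 4 →₀ ℕ) (a : K) :
    conicParam (monomial n a) = if n 3 = 0 then monomial (conicExp n) a else 0 := by
  rw [conicParam, aeval_monomial, Finsupp.prod_fintype _ _ (fun _ ↦ pow_zero _),
    Fin.prod_univ_four]
  split_ifs with h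
  · rw [h, pow_zero, mul_one, algebraMap_eq, monomial_eq, conicExp,
      Finsupp.prod_add_index' (by simp) (fun _ _ _ ↦ pow_add _ _ _),
      Finsupp.prod_single_index (by simp), Finsupp.prod_single_index (by simp)]
    simp only [Matrix.cons_val]
    ring
  · simp [zero_pow h]

theorem coeff_conicParam (g : MvPolynomial (Fin 4) K) (u : Fin 2 →₀ ℕ) :
    coeff u (conicParam g) = ∑ n ∈ g.support with n 3 = 0 ∧ conicExp n = u, coeff n g := by
  conv_lhs => rw [g.as_sum]
  rw [map_sum, coeff_sum, Finset.sum_filter]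
  refine Finset.sum_congr rfl fun n _ ↦ ?_
  rw [conicParam_monomial]
  by_cases h : n 3 = 0 <;> by_cases hu : conicExp n = u <;> simp [h, hu, coeff_monomial]

theorem coeff_conicParam_eq_sum {g : MvPolynomial (Fin 4) K} {u : Fin 2 →₀ ℕ}
    (S : Finset (Fin 4 →₀ ℕ)) (hS : ∀ n ∈ S, n 3 = 0 ∧ conicExp n = u)
    (hg : ∀ n ∈ g.support, n 3 = 0 → conicExp n = u → n ∈ S) :
    coeff u (conicParam g) = ∑ n ∈ S, coeff n g := by
  rw [coeff_conicParam]
  refine Finset.sum_subset (fun n hn ↦ ?_) (fun n hnS hn ↦ ?_)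
  · obtain ⟨hng, h3, hu⟩ := Finset.mem_filter.mp hn
    exact hg n hng h3 hu
  · simpa [hS n hnS] using hn

theorem coeff_conicParam_pderiv_eq_sum (i : Fin 4) {g : MvPolynomial (Fin 4) K}
    {u : Fin 2 →₀ ℕ} (S : Finset (Fin 4 →₀ ℕ)) (hS : ∀ n ∈ S, n 3 = 0 ∧ conicExp n = u)
    (hg : ∀ n, n + Finsupp.single i 1 ∈ g.support → n 3 = 0 → conicExp n = u → n ∈ S) :
    coeff u (conicParam (pderiv i g)) =
      ∑ n ∈ S, coeff (n + Finsupp.single i 1) g * (n i + 1) := by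
  rw [coeff_conicParam_eq_sum S hS fun n hn ↦ hg n (mem_support_of_mem_support_pderiv hn)]
  simp only [coeff_pderiv]

section Standard

variable {b : ℕ} {f : MvPolynomial (Fin 4) K}

theorem coeff_add_coeff_eq_zero_of_conicParam_eq_zero (hstd : ∀ n ∈ f.support, IsStandard b n)
    (hφ : conicParam f = 0) {a d k : ℕ} (hk : k ≤ 1) :
    coeff (exponent (a + 1) k (d + 1) 0) f + coeff (exponent a (k + 2) d 0) f = 0 := by
  have hne : exponent (a + 1) k (d + 1) 0 ≠ exponent a (k + 2) d 0 := by
    simp [eq_exponent_iff]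
  rw [← Finset.sum_pair (f := fun n ↦ coeff n f) hne,
    ← coeff_conicParam_eq_sum (u := conicExp (exponent a (k + 2) d 0)), hφ, coeff_zero]
  · simp [conicExp_eq_iff]
    omega
  · intro n hn h3 hu
    have := hstd n hn
    simp [IsStandard, conicExp_eq_iff, eq_exponent_iff] at this hu ⊢
    omega

theorem coeff_eq_zero_of_conicParam_eq_zero (hstd : ∀ n ∈ f.support, IsStandard b n)
    (hφ : conicParam f = 0) {a d k : ℕ} (hk : k ≤ 1) (had : a = 0 ∨ d = 0) :
    coeff (exponent a k d 0) f = 0 := by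
  rw [← Finset.sum_singleton (fun n ↦ coeff n f) (exponent a k d 0),
    ← coeff_conicParam_eq_sum (u := conicExp (exponent a k d 0)), hφ, coeff_zero]
  · simp
  · intro n hn h3 hu
    have := hstd n hn
    simp [IsStandard, conicExp_eq_iff, eq_exponent_iff] at this hu ⊢
    omega

theorem coeff_eq_zero_of_conicParam_pderiv_two {h : MvPolynomial (Fin 2) K}
    (hstd : ∀ n ∈ f.support, IsStandard b n)
    (hz : conicParam (pderiv 2 f) = X 0 ^ (2 * b + 1) * h) {a k : ℕ} (hk : k ≤ 1)
    (hak : 2 * a + 2 + k ≤ 2 * b) : coeff (exponent (a + 1) k 1 0) f = 0 := by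
  have := coeff_conicParam_pderiv_eq_sum 2 {exponent (a + 1) k 0 0}
    (u := conicExp (exponent (a + 1) k 0 0)) (g := f) (by simp) ?_
  · rw [hz, coeff_X_pow_mul_eq_zero (by simp [conicExp]; omega), Finset.sum_singleton,
      exponent_add_single_two] at this
    simpa using this.symm
  · intro n hn h3 hu
    have := hstd _ hn
    simp [IsStandard, conicExp_eq_iff, eq_exponent_iff] at this hu ⊢
    omega

theorem coeff_mul_add_coeff_mul_eq_zero_of_conicParam_pderiv_two {h : MvPolynomial (Fin 2) K}
    (hstd : ∀ n ∈ f.support, IsStandard b n)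
    (hz : conicParam (pderiv 2 f) = X 0 ^ (2 * b + 1) * h) {a d k : ℕ} (hk : k ≤ 1)
    (hak : 2 * a + 2 + k ≤ 2 * b) :
    coeff (exponent (a + 1) k (d + 2) 0) f * (d + 2) +
      coeff (exponent a (k + 2) (d + 1) 0) f * (d + 1) = 0 := by
  have hne : exponent (a + 1) k (d + 1) 0 ≠ exponent a (k + 2) d 0 := by
    simp [eq_exponent_iff]
  have := coeff_conicParam_pderiv_eq_sum 2 {exponent (a + 1) k (d + 1) 0, exponent a (k + 2) d 0}
    (u := conicExp (exponent (a + 1) k (d + 1) 0)) (g := f) ?_ ?_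
  · rw [hz, coeff_X_pow_mul_eq_zero (by simp [conicExp]; omega), Finset.sum_pair hne,
      exponent_add_single_two, exponent_add_single_two] at this
    simp only [exponent_apply, show d + 1 + 1 = d + 2 from rfl] at this
    simp at this
    linear_combination -this
  · simp [conicExp_eq_iff]
    omega
  · intro n hn h3 hu
    have := hstd _ hn
    simp [IsStandard, conicExp_eq_iff, eq_exponent_iff] at this hu ⊢
    omega

theorem coeff_eq_zero_of_apply_three_eq_zero {h : MvPolynomial (Fin 2) K}
    (hstd : ∀ n ∈ f.support, IsStandard b n) (hφ : conicParam f = 0)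
    (hz : conicParam (pderiv 2 f) = X 0 ^ (2 * b + 1) * h) {n : Fin 4 →₀ ℕ} (hn3 : n 3 = 0) :
    coeff n f = 0 := by
  -- A standard `x^a y^{k+2} z^d` has `2a + k + 2 ≤ 2b`, so its `φ ∂_z`-fibre lies below `s^{2b+1}`.
  have hy : ∀ a d k, k ≤ 1 → coeff (exponent a (k + 2) d 0) f = 0 := by
    intro a d k hk
    by_cases hak : 2 * a + 2 + k ≤ 2 * b
    · cases d with
      | zero =>
        simpa [coeff_eq_zero_of_conicParam_pderiv_two hstd hz hk hak] using
          coeff_add_coeff_eq_zero_of_conicParam_eq_zero hstd hφ (a := a) (d := 0) hk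
      | succ d =>
        linear_combination ((d : K) + 2) *
            coeff_add_coeff_eq_zero_of_conicParam_eq_zero hstd hφ (a := a) (d := d + 1) hk -
          coeff_mul_add_coeff_mul_eq_zero_of_conicParam_pderiv_two hstd hz (d := d) hk hak
    · refine notMem_support_iff.mp fun hn ↦ ?_
      have := hstd _ hn
      simp [IsStandard] at this
      omega
  by_cases hn : n ∈ f.support
  swap
  · exact notMem_support_iff.mp hn
  have hstdn := hstd n hn
  simp only [IsStandard] at hstdn
  obtain ⟨a, c, d, rfl⟩ : ∃ a c d, n = exponent a c d 0 :=
    ⟨n 0, n 1, n 2, eq_exponent_iff.mpr ⟨rfl, rfl, rfl, hn3⟩⟩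
  simp only [exponent_apply, Matrix.cons_val] at hstdn
  rcases Nat.lt_or_ge c 2 with hc | hc
  · by_cases had : a = 0 ∨ d = 0
    · exact coeff_eq_zero_of_conicParam_eq_zero hstd hφ (by omega) had
    obtain ⟨a, rfl⟩ := Nat.exists_eq_succ_of_ne_zero (not_or.mp had).1
    obtain ⟨d, rfl⟩ := Nat.exists_eq_succ_of_ne_zero (not_or.mp had).2
    simpa [hy a d c (by omega)] using
      coeff_add_coeff_eq_zero_of_conicParam_eq_zero hstd hφ (a := a) (d := d) (k := c) (by omega)
  · obtain ⟨k, rfl⟩ := Nat.exists_eq_add_of_le' hc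
    exact hy a d k (by omega)

theorem conicParam_pderiv_eq_zero (h0 : ∀ n : Fin 4 →₀ ℕ, n 3 = 0 → coeff n f = 0) {i : Fin 4}
    (hi : i ≠ 3) : conicParam (pderiv i f) = 0 := by
  ext u
  rw [coeff_conicParam, coeff_zero]
  refine Finset.sum_eq_zero fun n hn ↦ ?_
  rw [coeff_pderiv, h0 _ (by simp [(Finset.mem_filter.mp hn).2.1, hi]), zero_mul]

theorem coeff_eq_zero_of_apply_three_eq_one (hstd : ∀ n ∈ f.support, IsStandard b n)
    (hw : conicParam (pderiv 3 f) = 0) {n : Fin 4 →₀ ℕ} (hn3 : n 3 = 1) : coeff n f = 0 := by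
  obtain ⟨a, c, d, rfl⟩ : ∃ a c d, n = exponent a c d 1 :=
    ⟨n 0, n 1, n 2, eq_exponent_iff.mpr ⟨rfl, rfl, rfl, hn3⟩⟩
  by_cases hn : exponent a c d 1 ∈ f.support
  swap
  · exact notMem_support_iff.mp hn
  have hc : c ≤ 1 := by
    have := hstd _ hn
    simp [IsStandard] at this
    omega
  have := coeff_conicParam_pderiv_eq_sum 3 {exponent a c d 0}
    (u := conicExp (exponent a c d 0)) (g := f) (by simp) ?_
  · rw [hw, coeff_zero, Finset.sum_singleton, exponent_add_single_three] at this
    simpa using this.symm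
  · intro n hn h3 hu
    have := hstd _ hn
    simp [IsStandard, conicExp_eq_iff, eq_exponent_iff] at this hu ⊢
    omega

theorem eq_zero_of_forall_isStandard (hstd : ∀ n ∈ f.support, IsStandard b n)
    (hf : f ∈ doubleConicIdeal b) : f = 0 := by
  obtain ⟨hφ, h, hw, hz⟩ := hf
  have h0 : ∀ n : Fin 4 →₀ ℕ, n 3 = 0 → coeff n f = 0 := fun _ ↦
    coeff_eq_zero_of_apply_three_eq_zero hstd hφ hz
  have hh : h = 0 := by
    have := conicParam_pderiv_eq_zero h0 (i := 2) (by decide)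
    rw [hz] at this
    exact (mul_eq_zero.mp this).resolve_left (pow_ne_zero _ (X_ne_zero _))
  have h1 : ∀ n : Fin 4 →₀ ℕ, n 3 = 1 → coeff n f = 0 := fun _ ↦
    coeff_eq_zero_of_apply_three_eq_one hstd (by rw [hw, hh, mul_zero, neg_zero])
  ext n
  rw [coeff_zero]
  by_cases hn : n ∈ f.support
  · have := (hstd n hn).1
    obtain h3 | h3 : n 3 = 0 ∨ n 3 = 1 := by omega
    · exact h0 n h3
    · exact h1 n h3
  · exact notMem_support_iff.mp hn

end Standard

theorem initialIdeal_span_generators (b : ℕ) (hb : 1 ≤ b) :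
    initialIdeal drlt (Ideal.span (generators (K := K) b)) =
      Ideal.span {p | ∃ g ∈ generators (K := K) b, ∃ d, IsLeadMon drlt g d ∧ p = monomial d 1} := by
  have hGV := generators_subset_doubleConicIdeal (K := K) b hb
  refine initialIdeal_span_eq_of_exists_degree_le (fun _ _ ↦ drlt_iff_degRevLex_lt)
    (zero_notMem_generators b) fun f hf hf0 ↦ ?_
  refine degRevLex.exists_degree_le_of_mem (zero_notMem_generators b) hGV
    (fun r hr hrstd ↦ ?_) (Ideal.span_le.mpr hGV hf) hf0
  exact eq_zero_of_forall_isStandard (fun n hn ↦ isStandard_of_forall_not_le (hrstd n hn)) hr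

end DoubleConic

theorem stmt16_general {K : Type*} [Field K] (b : ℕ) (hb : 1 ≤ b) :
    let x : MvPolynomial (Fin 4) K := X 0
    let y : MvPolynomial (Fin 4) K := X 1
    let z : MvPolynomial (Fin 4) K := X 2
    let w : MvPolynomial (Fin 4) K := X 3
    let G : Set (MvPolynomial (Fin 4) K) :=
      {w ^ 2, w * (x * z - y ^ 2), (x * z - y ^ 2) ^ 2,
        x ^ b * (x * z - y ^ 2) - y * z ^ b * w,
        x ^ (b - 1) * y * (x * z - y ^ 2) - z ^ (b + 1) * w}
    initialIdeal drlt (Ideal.span G)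
      = Ideal.span {m | ∃ g ∈ G, ∃ d, IsLeadMon drlt g d ∧ m = monomial d 1} :=
  DoubleConic.initialIdeal_span_generators b hb

/-- In `K[x,y,z,w]`, for `b ≥ 1` the five polynomials
`w², w(xz−y²), (xz−y²)², x^b(xz−y²) − y z^b w, x^{b−1}y(xz−y²) − z^{b+1}w`
form a Gröbner basis, with respect to degrevlex with `x > y > z > w`, of the ideal they
generate: the initial ideal is generated by their leading monomials. -/
theorem stmt16 {K : Type*} [Field K] [CharZero K] (b : ℕ) (hb : 1 ≤ b) :
    let x : MvPolynomial (Fin 4) K := X 0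
    let y : MvPolynomial (Fin 4) K := X 1
    let z : MvPolynomial (Fin 4) K := X 2
    let w : MvPolynomial (Fin 4) K := X 3
    let G : Set (MvPolynomial (Fin 4) K) :=
      {w ^ 2, w * (x * z - y ^ 2), (x * z - y ^ 2) ^ 2,
        x ^ b * (x * z - y ^ 2) - y * z ^ b * w,
        x ^ (b - 1) * y * (x * z - y ^ 2) - z ^ (b + 1) * w}
    initialIdeal drlt (Ideal.span G)
      = Ideal.span {m | ∃ g ∈ G, ∃ d, IsLeadMon drlt g d ∧ m = monomial d 1} :=
  stmt16_general b hb
end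

section
/- In R = K[x,y,z,w] with I_X = ⟨w², w(xz−y²), (xz−y²)², x^{b−1}(xz−y²) − z^b w⟩ (b ≥ 2), let A = R/I_X. Then the kernel of the map A² → A, (a,b) ↦ (xz−y²)a − w b, is generated by the five elements (xz−y², 0), (w, 0), (0, w), (0, xz−y²), (x^{b−1}, z^b); i.e., every pair (a,b) ∈ A² with (xz−y²)a = w b in A is an A-linear combination of these five generators. -/
open MvPolynomial

lemma primeX3' {K : Type*} [Field K] : Prime (X 3 : MvPolynomial (Fin 4) K) := by
  have h1 : Prime (X 0 : MvPolynomial (Fin 4) K) := by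
    rw [← MulEquiv.prime_iff (finSuccEquiv K 3).toMulEquiv]
    simpa [finSuccEquiv_X_zero] using (Polynomial.prime_X (R := MvPolynomial (Fin 3) K))
  have h2 := (MulEquiv.prime_iff (renameEquiv K (Equiv.swap (0 : Fin 4) 3)).toMulEquiv
    (p := (X 0 : MvPolynomial (Fin 4) K))).symm
  simpa [Equiv.swap_apply_left] using h2.mp h1

/-- Over `A = K[x,y,z,w]/I_X` with
`I_X = ⟨w², w(xz−y²), (xz−y²)², x^{b−1}(xz−y²) − z^b w⟩` (`b ≥ 2`), every syzygy
`(a, c)` of the pair `(xz−y², −w)` (i.e. `(xz−y²)a = w c` in `A`) is an `A`-linear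
combination of the five generators `(xz−y², 0)`, `(w, 0)`, `(0, w)`, `(0, xz−y²)`,
`(x^{b−1}, z^b)`. -/
theorem stmt18 {K : Type*} [Field K] (b : ℕ) (hb : 2 ≤ b) :
    ∀ (x y z w : MvPolynomial (Fin 4) K), x = X 0 → y = X 1 → z = X 2 → w = X 3 →
    ∀ (IX : Ideal (MvPolynomial (Fin 4) K)),
      IX = Ideal.span {w ^ 2, w * (x * z - y ^ 2), (x * z - y ^ 2) ^ 2,
        x ^ (b - 1) * (x * z - y ^ 2) - z ^ b * w} →
    ∀ a c : MvPolynomial (Fin 4) K ⧸ IX,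
      Ideal.Quotient.mk IX (x * z - y ^ 2) * a = Ideal.Quotient.mk IX w * c →
      ∃ c1 c2 c3 c4 c5 : MvPolynomial (Fin 4) K ⧸ IX,
        a = Ideal.Quotient.mk IX (x * z - y ^ 2) * c1 + Ideal.Quotient.mk IX w * c2
            + Ideal.Quotient.mk IX (x ^ (b - 1)) * c5 ∧
        c = Ideal.Quotient.mk IX w * c3 + Ideal.Quotient.mk IX (x * z - y ^ 2) * c4
            + Ideal.Quotient.mk IX (z ^ b) * c5 := by
  intro x y z w hx hy hz hw IX hIX a c h
  obtain ⟨A, rfl⟩ := Ideal.Quotient.mk_surjective a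
  obtain ⟨C, rfl⟩ := Ideal.Quotient.mk_surjective c
  set q : MvPolynomial (Fin 4) K := x * z - y ^ 2 with hq
  have hmem : q * A - w * C ∈ IX := by
    rw [← Ideal.Quotient.eq]
    rw [map_mul, map_mul]
    exact h
  rw [hIX, show ({w ^ 2, w * q, q ^ 2, x ^ (b - 1) * q - z ^ b * w} : Set _) =
      insert (w ^ 2) (insert (w * q) (insert (q ^ 2) {x ^ (b - 1) * q - z ^ b * w})) from rfl]
    at hmem
  rw [Ideal.mem_span_insert] at hmem
  obtain ⟨α, r1, hr1, he1⟩ := hmem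
  rw [Ideal.mem_span_insert] at hr1
  obtain ⟨β, r2, hr2, he2⟩ := hr1
  rw [Ideal.mem_span_insert] at hr2
  obtain ⟨γ, r3, hr3, he3⟩ := hr2
  rw [Ideal.mem_span_singleton] at hr3
  obtain ⟨δ, he4⟩ := hr3
  -- combined identity
  have key : q * (A - β * w - γ * q - δ * x ^ (b - 1)) = w * (C + α * w - δ * z ^ b) := by
    have : q * A - w * C = α * w ^ 2 + β * (w * q) + γ * q ^ 2
        + (x ^ (b - 1) * q - z ^ b * w) * δ := by
      rw [he1, he2, he3, he4]; ring
    linear_combination this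
  have hwprime : Prime w := hw ▸ primeX3'
  have hwdvd : w ∣ (A - β * w - γ * q - δ * x ^ (b - 1)) := by
    rcases (hwprime.dvd_or_dvd ⟨_, key⟩ : w ∣ q ∨ _) with hd | hd
    · exfalso
      subst hx hy hz hw
      have := (eval (![1, 0, 1, 0] : Fin 4 → K)).map_dvd hd
      simp [hq] at this
    · exact hd
  obtain ⟨B, hB⟩ := hwdvd
  have hwne : w ≠ 0 := hwprime.ne_zero
  have hC : C + α * w - δ * z ^ b = q * B := by
    apply mul_left_cancel₀ hwne
    rw [← key, hB]; ring
  refine ⟨Ideal.Quotient.mk IX γ, Ideal.Quotient.mk IX (β + B), Ideal.Quotient.mk IX (-α),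
    Ideal.Quotient.mk IX B, Ideal.Quotient.mk IX δ, ?_, ?_⟩
  · rw [← map_mul, ← map_mul, ← map_mul, ← map_add, ← map_add]
    congr 1
    linear_combination hB
  · rw [← map_mul, ← map_mul, ← map_mul, ← map_add, ← map_add]
    congr 1
    linear_combination hC
end
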